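/- arXiv:2102.05205 — 6 statements merged into one kernel-verified Lean document; each statement's English description precedes it below -/
import Mathlib

section
/- Let T = wT_φ on C(K) with φ a non-surjective homeomorphism of K into itself, L = ⋂_{n≥0} φⁿ(K), M = K \ Int_K(L). Then σ(T, C(M)) is either the closed disk of radius ρ(T, C(M)) centered at 0, or the singleton {0}. -/
/-!
The spectrum lies in the closed disk of radius `ρ` and contains `0`, because the restriction `Φ`
of `φ` to `M` is not surjective. The content is that every `z ≠ 0` in the resolvent set satisfies
`ρ ≤ |z|`. Write `w_N = w · w ∘ Φ ⋯ w ∘ Φ^(N-1)`, so that `Tⁿ f = w_n · f ∘ Φⁿ`. If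
`x ∉ range Φ^[m]`, then the orbit of `x` is injective and `Φ^N x ∉ range Φ^[N+m]`, so Urysohn
gives `f` with `‖f‖ ≤ 1`, equal to `1` at `Φ^N x` and to `0` at the other points `Φ^i x`,
`i < N + m`, and on `range Φ^[N+m]`. Then `T^(N+m) f = 0`, hence `(z - T)⁻¹ f` is the finite
Neumann sum `∑ z^-(i+1) Tⁱ f`, whose value at `x` is `z^-(N+1) w_N(x)`. This bounds `|w_N|` by
`‖(z - T)⁻¹‖ |z|^(N+1)` on the points `x` of this kind, which are dense in `M` since
`⋂ₙ range Φⁿ ⊆ L` has empty interior in `M = K \ Int L`. Thus `‖T^N‖ ≤ ‖(z - T)⁻¹‖ |z|^(N+1)`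
for every `N`, and `ρ ≤ |z|`. A closed set containing `0` and all `z` with `|z| < ρ` contains the
closed disk when `ρ > 0`.
-/

open Function Set

lemma le_of_forall_pow_le_mul_pow {a b C : ℝ} (hb : 0 < b) (h : ∀ n : ℕ, a ^ n ≤ C * b ^ n) :
    a ≤ b := by
  by_contra! hba
  obtain ⟨n, hn⟩ := pow_unbounded_of_one_lt C ((one_lt_div hb).2 hba)
  have := h n
  rw [div_pow, lt_div_iff₀ (pow_pos hb n)] at hn
  linarith

theorem spectralRadius_le_of_forall_norm_pow_le {𝕜 A : Type*} [NormedField 𝕜] [NormedRing A]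
    [NormedAlgebra 𝕜 A] [CompleteSpace A] {a : A} {C : ℝ} {r : NNReal} (hr : 0 < r)
    (h : ∀ n : ℕ, ‖a ^ n‖ ≤ C * r ^ n) : spectralRadius 𝕜 a ≤ r := by
  refine iSup₂_le fun k hk => ENNReal.coe_le_coe.2 ?_
  refine le_of_forall_pow_le_mul_pow (C := C * ‖(1 : A)‖) hr fun n => ?_
  calc ‖k‖ ^ n = ‖k ^ n‖ := (norm_pow k n).symm
    _ ≤ ‖a ^ n‖ * ‖(1 : A)‖ := spectrum.norm_le_norm_mul_of_mem (spectrum.pow_mem_pow a n hk)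
    _ ≤ C * r ^ n * ‖(1 : A)‖ := by gcongr; exact h n
    _ = C * ‖(1 : A)‖ * r ^ n := by ring

theorem spectralRadius_ne_top {𝕜 A : Type*} [NormedField 𝕜] [NormedRing A]
    [NormedAlgebra 𝕜 A] [CompleteSpace A] (a : A) : spectralRadius 𝕜 a ≠ ⊤ :=
  ne_top_of_le_ne_top (by simp [ENNReal.mul_eq_top])
    (spectrum.spectralRadius_le_pow_nnnorm_pow_one_div 𝕜 a 0)

theorem algebraMap_sub_mul_sum_inv_pow_smul {𝕜 A : Type*} [Field 𝕜] [Ring A] [Algebra 𝕜 A]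
    (a : A) {z : 𝕜} (hz : z ≠ 0) (p : ℕ) :
    (algebraMap 𝕜 A z - a) * ∑ i ∈ Finset.range p, z⁻¹ ^ (i + 1) • a ^ i =
      1 - z⁻¹ ^ p • a ^ p := by
  induction p with
  | zero => simp
  | succ p ih =>
    rw [Finset.sum_range_succ, mul_add, ih, Algebra.algebraMap_eq_smul_one, sub_mul,
      smul_mul_assoc, one_mul, mul_smul_comm, ← pow_succ', smul_smul, pow_succ z⁻¹ p,
      mul_left_comm, mul_inv_cancel₀ hz, mul_one]
    abel

theorem Function.IsPeriodicPt.mem_range_iterate {α : Type*} {f : α → α} {k : ℕ} {x : α}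
    (hx : IsPeriodicPt f k x) (hk : 0 < k) (m : ℕ) : x ∈ range f^[m] := by
  refine ⟨f^[k * m - m] x, ?_⟩
  rw [← iterate_add_apply, Nat.add_sub_cancel' (Nat.le_mul_of_pos_left m hk)]
  exact (hx.mul_const m).eq

theorem Function.Injective.injective_iterate_apply_of_notMem_range {α : Type*} {f : α → α}
    (hf : Injective f) {x : α} {m : ℕ} (hx : x ∉ range f^[m]) :
    Injective fun n => f^[n] x := by
  refine .of_lt_imp_ne fun i j hij hfij => hx ?_
  refine IsPeriodicPt.mem_range_iterate (k := j - i) ?_ (by omega) m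
  apply hf.iterate i
  rw [← iterate_add_apply, Nat.add_sub_cancel' hij.le]
  exact hfij.symm

theorem interior_preimage_val_compl_interior {X : Type*} [TopologicalSpace X] (s : Set X) :
    interior (((↑) : ↥(interior s)ᶜ → X) ⁻¹' s) = ∅ := by
  obtain ⟨U, hU, hUO⟩ := isOpen_induced_iff.1
    (isOpen_interior (s := (((↑) : ↥(interior s)ᶜ → X) ⁻¹' s)))
  have hUs : U ⊆ interior s := by
    refine interior_maximal (fun u hu => ?_) hU
    by_cases hu' : u ∈ interior s
    · exact interior_subset hu'
    · have : (⟨u, hu'⟩ : ↥(interior s)ᶜ) ∈ interior (Subtype.val ⁻¹' s) := by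
        rw [← hUO]; exact hu
      exact (interior_subset this : (⟨u, hu'⟩ : ↥(interior s)ᶜ) ∈ Subtype.val ⁻¹' s)
  refine eq_empty_iff_forall_notMem.2 fun x hx => x.2 (hUs ?_)
  rw [← hUO] at hx
  exact hx

theorem interior_iInter_range_iterate_restrict_eq_empty {X : Type*} [TopologicalSpace X]
    {f : X → X} (h : MapsTo f (interior (⋂ n, range f^[n]))ᶜ (interior (⋂ n, range f^[n]))ᶜ) :
    interior (⋂ n, range h.restrict^[n]) = ∅ := by
  refine eq_empty_of_subset_empty ((interior_mono fun x hx => ?_).trans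
    (interior_preimage_val_compl_interior _).subset)
  simp only [mem_preimage, mem_iInter] at hx ⊢
  intro n
  obtain ⟨y, hy⟩ := hx n
  exact ⟨y, by rw [← hy, h.coe_iterate_restrict]⟩

theorem not_surjective_of_interior_iInter_range_iterate_eq_empty {X : Type*} [TopologicalSpace X]
    [Nonempty X] {f : X → X} (h : interior (⋂ n, range f^[n]) = ∅) : ¬Surjective f :=
  fun hf => by simp [(hf.iterate _).range_eq] at h

def weightIter {X R : Type*} [CommMonoid R] (v : X → R) (ψ : X → X) (n : ℕ) (x : X) : R :=
  ∏ i ∈ Finset.range n, v (ψ^[i] x)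

theorem continuous_weightIter {X R : Type*} [TopologicalSpace X] [CommMonoid R]
    [TopologicalSpace R] [ContinuousMul R] {v : X → R} {ψ : X → X} (hv : Continuous v)
    (hψ : Continuous ψ) (n : ℕ) : Continuous (weightIter v ψ n) :=
  continuous_finsetProd _ fun i _ => hv.comp (hψ.iterate i)

theorem exists_continuousMap_complex_bump {X : Type*} [TopologicalSpace X] [CompactSpace X]
    [T2Space X] {D : Set X} (hD : IsClosed D) {t : X} (ht : t ∉ D) :
    ∃ f : C(X, ℂ), ‖f‖ ≤ 1 ∧ f t = 1 ∧ ∀ x ∈ D, f x = 0 := by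
  obtain ⟨g, hg0, hg1, hg01⟩ := exists_continuous_zero_one_of_isClosed hD isClosed_singleton
    (disjoint_singleton_right.2 ht)
  refine ⟨(ContinuousMap.mk ((↑) : ℝ → ℂ) Complex.continuous_ofReal).comp g, ?_, ?_, ?_⟩
  · refine (ContinuousMap.norm_le _ zero_le_one).2 fun x => ?_
    simpa [abs_le] using ⟨(hg01 x).1.trans' (by norm_num), (hg01 x).2⟩
  · simp [hg1 rfl]
  · intro x hx
    simp [hg0 hx]

namespace WeightedComposition

variable {X : Type*} [TopologicalSpace X] [CompactSpace X] {ψ : X → X} {v : X → ℂ}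
  {T : C(X, ℂ) →L[ℂ] C(X, ℂ)}

theorem pow_apply (hT : ∀ f x, T f x = v x * f (ψ x)) (n : ℕ) (f : C(X, ℂ)) (x : X) :
    (T ^ n) f x = weightIter v ψ n x * f (ψ^[n] x) := by
  induction n generalizing f with
  | zero => simp [weightIter]
  | succ n ih =>
    rw [pow_succ, mul_apply_eq_comp, ih, hT, weightIter, weightIter, Finset.prod_range_succ,
      iterate_succ_apply']
    ring

theorem norm_pow_le_of_forall_norm_weightIter_le (hT : ∀ f x, T f x = v x * f (ψ x))
    {n : ℕ} {c : ℝ} (hc : 0 ≤ c) (h : ∀ x, ‖weightIter v ψ n x‖ ≤ c) : ‖T ^ n‖ ≤ c :=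
  ContinuousLinearMap.opNorm_le_bound _ hc fun f =>
    (ContinuousMap.norm_le _ (by positivity)).2 fun x => by
      rw [pow_apply hT, norm_mul]
      exact mul_le_mul (h x) (f.norm_coe_le_norm _) (norm_nonneg _) hc

variable [T2Space X]

theorem zero_mem_spectrum (hT : ∀ f x, T f x = v x * f (ψ x)) (hψc : Continuous ψ)
    (hψs : ¬Surjective ψ) : (0 : ℂ) ∈ spectrum ℂ T := by
  obtain ⟨x₀, hx₀⟩ := not_forall.1 hψs
  obtain ⟨f, -, hf1, hf0⟩ := exists_continuousMap_complex_bump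
    (isCompact_range hψc).isClosed (t := x₀) (by simpa using hx₀)
  have hTf : T f = 0 := by
    ext x
    simp [hT, hf0 _ (mem_range_self x)]
  rw [spectrum.zero_mem_iff]
  rintro ⟨u, rfl⟩
  have hf : f = 0 := by
    rw [← one_apply_eq_self (F := C(X, ℂ) →L[ℂ] C(X, ℂ)) f, ← u.inv_mul, mul_apply_eq_comp, hTf,
      map_zero]
  simp [hf] at hf1

theorem exists_bump_along_orbit (hψc : Continuous ψ) (hψi : Injective ψ) {x : X} {m : ℕ}
    (hx : x ∉ range ψ^[m]) (N : ℕ) :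
    ∃ f : C(X, ℂ), ‖f‖ ≤ 1 ∧ (∀ y, f (ψ^[N + m] y) = 0) ∧
      ∀ i < N + m, f (ψ^[i] x) = if i = N then 1 else 0 := by
  have horbit := hψi.injective_iterate_apply_of_notMem_range hx
  set D := range ψ^[N + m] ∪ (fun i => ψ^[i] x) '' {i | i < N + m ∧ i ≠ N}
  have hD : IsClosed D := (isCompact_range (hψc.iterate _)).isClosed.union
    (((finite_lt_nat _).subset fun _ hi => hi.1).image _).isClosed
  have htD : ψ^[N] x ∉ D := by
    rintro (⟨y, hy⟩ | ⟨i, ⟨-, hiN⟩, hi⟩)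
    · rw [iterate_add_apply] at hy
      exact hx ⟨y, hψi.iterate N hy⟩
    · exact hiN (horbit hi)
  obtain ⟨f, hf, hf1, hf0⟩ := exists_continuousMap_complex_bump hD htD
  refine ⟨f, hf, fun y => hf0 _ (.inl (mem_range_self y)), fun i hi => ?_⟩
  split_ifs with hiN
  · rw [hiN, hf1]
  · exact hf0 _ (.inr ⟨i, ⟨hi, hiN⟩, rfl⟩)

theorem norm_weightIter_le (hT : ∀ f x, T f x = v x * f (ψ x)) (hψc : Continuous ψ)
    (hψi : Injective ψ) {z : ℂ} (hz0 : z ≠ 0) (hz : z ∈ resolventSet ℂ T) {x : X} {m : ℕ}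
    (hx : x ∉ range ψ^[m]) (N : ℕ) :
    ‖weightIter v ψ N x‖ ≤ ‖resolvent T z‖ * ‖z‖ ^ (N + 1) := by
  obtain ⟨f, hf, hf0, hfx⟩ := exists_bump_along_orbit hψc hψi hx N
  set p := N + m
  set G := ∑ i ∈ Finset.range p, z⁻¹ ^ (i + 1) • T ^ i
  have hTp : (T ^ p) f = 0 := by
    ext y
    rw [pow_apply hT, hf0, mul_zero, ContinuousMap.zero_apply]
  have hGf : G f = resolvent T z f := by
    have h := congrArg (resolvent T z * ·) (algebraMap_sub_mul_sum_inv_pow_smul T hz0 p)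
    simp only [← mul_assoc] at h
    rw [resolvent, Ring.inverse_mul_cancel _ (spectrum.mem_resolventSet_iff.1 hz), one_mul] at h
    change G = _ at h
    rw [h, mul_sub, mul_one, sub_apply, mul_smul_comm,
      FunLike.coe_smul, Pi.smul_apply, mul_apply_eq_comp, hTp, map_zero, smul_zero, sub_zero]
    rfl
  have hGx : G f x = z⁻¹ ^ (N + 1) * weightIter v ψ N x := by
    have hm : m ≠ 0 := by
      rintro rfl
      exact hx ⟨x, rfl⟩
    have hN : N ∈ Finset.range p := Finset.mem_range.2 (by omega)
    simp only [G, FunLike.coe_sum, Finset.sum_apply, ContinuousMap.sum_apply,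
      FunLike.coe_smul, Pi.smul_apply, ContinuousMap.smul_apply, pow_apply hT, smul_eq_mul]
    rw [Finset.sum_congr rfl fun i hi => by rw [hfx i (Finset.mem_range.1 hi)],
      Finset.sum_eq_single_of_mem N hN fun i _ hiN => by simp [hiN]]
    simp
  calc ‖weightIter v ψ N x‖ = ‖z‖ ^ (N + 1) * ‖G f x‖ := by
        rw [hGx, norm_mul, norm_pow, norm_inv, ← mul_assoc, ← mul_pow,
          mul_inv_cancel₀ (norm_ne_zero_iff.2 hz0), one_pow, one_mul]
    _ ≤ ‖z‖ ^ (N + 1) * (‖resolvent T z‖ * 1) := by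
        gcongr
        rw [hGf]
        exact ((resolvent T z f).norm_coe_le_norm x).trans ((resolvent T z).le_opNorm_of_le hf)
    _ = ‖resolvent T z‖ * ‖z‖ ^ (N + 1) := by ring

theorem spectralRadius_le_of_mem_resolventSet (hT : ∀ f x, T f x = v x * f (ψ x))
    (hv : Continuous v) (hψc : Continuous ψ) (hψi : Injective ψ)
    (hψ : interior (⋂ n, range ψ^[n]) = ∅) {z : ℂ} (hz0 : z ≠ 0)
    (hz : z ∈ resolventSet ℂ T) : spectralRadius ℂ T ≤ ‖z‖₊ := by
  refine spectralRadius_le_of_forall_norm_pow_le (𝕜 := ℂ) (a := T) (C := ‖resolvent T z‖ * ‖z‖)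
    (r := ‖z‖₊) (nnnorm_pos.2 hz0) fun N => ?_
  rw [coe_nnnorm, mul_assoc, ← pow_succ']
  refine norm_pow_le_of_forall_norm_weightIter_le hT (by positivity) fun x => ?_
  refine (interior_eq_empty_iff_dense_compl.1 hψ).induction (fun y hy => ?_)
    (isClosed_le (continuous_weightIter hv hψc N).norm continuous_const) x
  obtain ⟨m, hm⟩ := mem_iUnion.1 (compl_iInter _ ▸ hy)
  exact norm_weightIter_le hT hψc hψi hz0 hz hm N

end WeightedComposition

theorem spectrum_eq_closedDisk_or_eq_singleton_zero {A : Type*} [NormedRing A] [NormedAlgebra ℂ A]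
    [CompleteSpace A] {a : A} (h0 : (0 : ℂ) ∈ spectrum ℂ a)
    (h : ∀ z : ℂ, z ≠ 0 → z ∈ resolventSet ℂ a → spectralRadius ℂ a ≤ ‖z‖₊) :
    spectrum ℂ a = {z : ℂ | (‖z‖₊ : ENNReal) ≤ spectralRadius ℂ a} ∨ spectrum ℂ a = {0} := by
  set R := (spectralRadius ℂ a).toNNReal
  have hR : (R : ENNReal) = spectralRadius ℂ a := ENNReal.coe_toNNReal (spectralRadius_ne_top a)
  have hsub : ∀ z ∈ spectrum ℂ a, ‖z‖ ≤ R := fun z hz => by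
    have : (‖z‖₊ : ENNReal) ≤ R := hR.symm ▸ le_iSup₂ (α := ENNReal) z hz
    exact_mod_cast this
  have hdisk : {z : ℂ | (‖z‖₊ : ENNReal) ≤ R} = Metric.closedBall 0 R := by
    ext z
    simp [← NNReal.coe_le_coe]
  rw [← hR, hdisk]
  clear_value R
  rcases eq_or_ne R 0 with rfl | hR0
  · exact .inr (eq_singleton_iff_unique_mem.2 ⟨h0, fun z hz => by simpa using hsub z hz⟩)
  have hball : Metric.ball (0 : ℂ) R ⊆ spectrum ℂ a := fun z hz => by
    rcases eq_or_ne z 0 with rfl | hz0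
    · exact h0
    by_contra hz'
    have hRz : (R : ENNReal) ≤ ‖z‖₊ :=
      hR ▸ h z hz0 (spectrum.mem_resolventSet_iff.2 (spectrum.notMem_iff.1 hz'))
    exact (mem_ball_zero_iff.1 hz).not_ge (by exact_mod_cast hRz)
  refine .inl (subset_antisymm (fun z hz => mem_closedBall_zero_iff.2 (hsub z hz)) ?_)
  rw [← closure_ball _ (NNReal.coe_ne_zero.2 hR0)]
  exact closure_minimal hball (spectrum.isClosed a)

theorem stmt3_general (K : Type*) [TopologicalSpace K] [T2Space K]
    (φ : K → K) (hφc : Continuous φ) (hφi : Function.Injective φ)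
    (hns : Set.range φ ≠ Set.univ)
    (w : C(K, ℂ))
    (L M : Set K) [CompactSpace M]
    (hL : L = ⋂ n : ℕ, φ^[n] '' Set.univ)
    (hM : M = (interior L)ᶜ)
    (hφM : ∀ k ∈ M, φ k ∈ M)
    (TM : C(M, ℂ) →L[ℂ] C(M, ℂ))
    (hTM : ∀ (f : C(M, ℂ)) (k : M), TM f k = w k.1 * f ⟨φ k.1, hφM k.1 k.2⟩) :
    spectrum ℂ TM = {z : ℂ | (‖z‖₊ : ENNReal) ≤ spectralRadius ℂ TM} ∨
      spectrum ℂ TM = {0} := by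
  subst hM
  simp only [image_univ] at hL
  subst hL
  have hmaps : MapsTo φ _ _ := fun k hk => hφM k hk
  set Φ := hmaps.restrict
  have hΦL : interior (⋂ n, range Φ^[n]) = ∅ :=
    interior_iInter_range_iterate_restrict_eq_empty hmaps
  have hne : Nonempty ↥(interior (⋂ n, range φ^[n]))ᶜ := by
    refine (nonempty_compl.2 fun h => hns (eq_univ_of_univ_subset ?_)).to_subtype
    calc univ = interior (⋂ n, range φ^[n]) := h.symm
      _ ⊆ range φ^[1] := interior_subset.trans (iInter_subset _ 1)
      _ = range φ := rfl
  have hΦc : Continuous Φ := hφc.restrict hmaps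
  have hT : ∀ f k, TM f k = w k.1 * f (Φ k) := hTM
  have h0 := WeightedComposition.zero_mem_spectrum hT hΦc
    (not_surjective_of_interior_iInter_range_iterate_eq_empty hΦL)
  refine spectrum_eq_closedDisk_or_eq_singleton_zero (a := TM) h0 fun z hz0 hz => ?_
  exact WeightedComposition.spectralRadius_le_of_mem_resolventSet hT
    (w.continuous.comp continuous_subtype_val) hΦc (hmaps.restrict_inj.2 hφi.injOn) hΦL hz0 hz

/-- `σ(T, C(M))` is either the closed disk of radius `ρ(T, C(M))` centered
at `0`, or the singleton `{0}`. -/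
theorem stmt3 (K : Type*) [TopologicalSpace K] [CompactSpace K] [T2Space K]
    (φ : K → K) (hφc : Continuous φ) (hφi : Function.Injective φ)
    (hns : Set.range φ ≠ Set.univ)
    (w : C(K, ℂ)) (T : C(K, ℂ) →L[ℂ] C(K, ℂ))
    (hT : ∀ (f : C(K, ℂ)) (k : K), T f k = w k * f (φ k))
    (L M : Set K) [CompactSpace M]
    (hL : L = ⋂ n : ℕ, φ^[n] '' Set.univ)
    (hM : M = (interior L)ᶜ)
    (hφM : ∀ k ∈ M, φ k ∈ M)
    (TM : C(M, ℂ) →L[ℂ] C(M, ℂ))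
    (hTM : ∀ (f : C(M, ℂ)) (k : M), TM f k = w k.1 * f ⟨φ k.1, hφM k.1 k.2⟩) :
    spectrum ℂ TM = {z : ℂ | (‖z‖₊ : ENNReal) ≤ spectralRadius ℂ TM} ∨
      spectrum ℂ TM = {0} :=
  stmt3_general K φ hφc hφi hns w L M hL hM hφM TM hTM
end

section
/- Let T = wT_φ on C(K) with φ a non-surjective homeomorphism of K into itself and L = ⋂_{n≥0} φⁿ(K). If T is invertible as an operator on C(L) and 0 < |λ| < 1/ρ(T⁻¹, C(L)), then (λI - T)C(K) = C(K), i.e., λI - T is surjective on C(K). -/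
/-!
Choose `n` with `2 |λ|ⁿ ‖T⁻ⁿ‖ < 1` (Gelfand's formula). Since `Tⁿ T⁻ⁿ = 1` on `C(L)`, the weight
`wₙ = ∏_{i<n} w ∘ φⁱ` of `Tⁿ` satisfies `|wₙ| > 2 |λ|ⁿ` on `L`, hence, by compactness, on some
`φʲ(K)` and so on `M = φⁿʲ(K)`. On `M` the equation `λⁿ f - wₙ · f ∘ φⁿ = g` is solved by a Neumann
series: norm-preserving Tietze extensions from `φⁿ(M)` invert `f ↦ wₙ · f ∘ φⁿ` up to a contraction.
A solution on `φⁿ⁽ᵗ⁺¹⁾(K)` gives one on `φⁿᵗ(K)`, so it propagates back to all of `K`, and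
`λⁿ - Tⁿ = (λ - T) ∑ λⁱ Tⁿ⁻¹⁻ⁱ` makes `λ - T` surjective.
-/

open Filter Topology Set
open scoped ENNReal NNReal

namespace ContinuousLinearMap

variable {𝕜 E F : Type*} [NontriviallyNormedField 𝕜] [NormedAddCommGroup E] [NormedSpace 𝕜 E]
  [NormedAddCommGroup F] [NormedSpace 𝕜 F]

theorem surjective_sub_of_contracting_lift [CompleteSpace E] {R A : E →L[𝕜] F}
    (hA : Function.Surjective A) {B : E → E} (hAB : ∀ x, A (B x) = R x) {q : ℝ} (hq : q < 1)
    (hB : ∀ x, ‖B x‖ ≤ q * ‖x‖) :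
    Function.Surjective (R - A) := by
  intro g
  obtain ⟨x₀, hx₀⟩ := hA (-g)
  have hsum : Summable fun n => B^[n] x₀ :=
    summable_of_ratio_norm_eventually_le hq <| .of_forall fun n => by
      rw [Function.iterate_succ_apply']
      exact hB _
  refine ⟨∑' n, B^[n] x₀, ?_⟩
  have hA_tsum : A (∑' n, B^[n] x₀) = A x₀ + R (∑' n, B^[n] x₀) := by
    rw [A.map_tsum hsum, (A.summable hsum).tsum_eq_zero_add, R.map_tsum hsum]
    simp only [Function.iterate_succ_apply', hAB, Function.iterate_zero_apply]
  rw [sub_apply, hA_tsum, hx₀]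
  abel

theorem surjective_smul_id_sub_of_pow (T : E →L[𝕜] E) (c : 𝕜) (n : ℕ)
    (h : Function.Surjective (c ^ n • ContinuousLinearMap.id 𝕜 E - T ^ n)) :
    Function.Surjective (c • ContinuousLinearMap.id 𝕜 E - T) := by
  have hfactor := ((Commute.one_left T).smul_left c).mul_geom_sum₂ n
  rw [smul_pow, one_pow] at hfactor
  rw [← one_def] at h ⊢
  refine Function.Surjective.of_comp
    (g := ⇑(∑ i ∈ Finset.range n, (c • 1) ^ i * T ^ (n - 1 - i))) ?_
  change Function.Surjective ⇑((c • 1 - T) * _)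
  rwa [hfactor]

end ContinuousLinearMap

theorem ContinuousMap.exists_extension_norm_le {𝕜 X₁ X : Type*} [RCLike 𝕜]
    [TopologicalSpace X₁] [CompactSpace X₁] [TopologicalSpace X] [CompactSpace X] [T2Space X]
    {e : X₁ → X} (he : IsClosedEmbedding e) (u : C(X₁, 𝕜)) :
    ∃ g : C(X, 𝕜), (∀ x, g (e x) = u x) ∧ ‖g‖ ≤ ‖u‖ := by
  rcases (norm_nonneg u).eq_or_lt with hu | hu
  · exact ⟨0, fun x => by simp [norm_eq_zero.mp hu.symm], by simp⟩
  have := Metric.instTietzeExtensionClosedBall 𝕜 (0 : 𝕜) hu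
  obtain ⟨g, hg_mem, hg⟩ := u.exists_extension_forall_mem he
    (t := Metric.closedBall 0 ‖u‖) fun x => by simpa using u.norm_coe_le_norm x
  refine ⟨g, fun x => congr($hg x), (g.norm_le (norm_nonneg u)).mpr fun x => ?_⟩
  simpa using hg_mem x

theorem eventually_pow_mul_norm_pow_lt {A : Type*} [NormedRing A] [NormedAlgebra ℂ A]
    [CompleteSpace A] (a : A) {r : ℝ≥0} (hr : (r : ℝ≥0∞) < (spectralRadius ℂ a)⁻¹)
    {ε : ℝ} (hε : 0 < ε) : ∀ᶠ n : ℕ in atTop, r ^ n * ‖a ^ n‖ < ε := by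
  obtain ⟨c, hac, hcr⟩ := ENNReal.lt_iff_exists_nnreal_btwn.mp (ENNReal.lt_inv_iff_lt_inv.mp hr)
  have hrc : (r * c : ℝ) < 1 := by
    have : (r : ℝ≥0∞) * c < 1 := by
      rw [mul_comm]
      exact ENNReal.mul_lt_of_lt_div (by rwa [one_div])
    exact_mod_cast this
  have hpow : ∀ᶠ n : ℕ in atTop, ‖a ^ n‖ ≤ (c : ℝ) ^ n := by
    filter_upwards [(spectrum.pow_nnnorm_pow_one_div_tendsto_nhds_spectralRadius a)
      |>.eventually_lt_const hac, eventually_gt_atTop 0] with n hn hn0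
    rw [one_div, ← ENNReal.coe_rpow_of_nonneg _ (by positivity), ENNReal.coe_lt_coe,
      NNReal.rpow_inv_lt_iff (by positivity), NNReal.rpow_natCast] at hn
    exact_mod_cast hn.le
  filter_upwards [hpow, (tendsto_pow_atTop_nhds_zero_of_lt_one (by positivity) hrc)
    |>.eventually_lt_const hε] with n hn hrcn
  calc (r : ℝ) ^ n * ‖a ^ n‖ ≤ r ^ n * c ^ n := by gcongr
    _ = (r * c) ^ n := (mul_pow _ _ _).symm
    _ < ε := hrcn

theorem antitone_range_iterate {X : Type*} (φ : X → X) : Antitone fun n => range φ^[n] :=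
  antitone_nat_of_succ_le fun n => by
    rintro _ ⟨x, rfl⟩
    exact ⟨φ x, (Function.iterate_succ_apply φ n x).symm⟩

theorem Continuous.exists_range_iterate_subset {X : Type*} [TopologicalSpace X] [CompactSpace X]
    [T2Space X] {φ : X → X} (hφ : Continuous φ) {U : Set X} (hU : IsOpen U)
    (hLU : ⋂ n, range φ^[n] ⊆ U) : ∃ n, range φ^[n] ⊆ U :=
  exists_subset_nhds_of_isCompact' (antitone_range_iterate φ).directed_ge
    (fun n => isCompact_range (hφ.iterate n)) (fun n => (isCompact_range (hφ.iterate n)).isClosed)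
    fun _ hx => hU.mem_nhds (hLU hx)

section WeightedComposition

variable {X : Type*}

def iterWeight (w : X → ℂ) (φ : X → X) (n : ℕ) (x : X) : ℂ :=
  ∏ i ∈ Finset.range n, w (φ^[i] x)

theorem continuous_iterWeight [TopologicalSpace X] {w : X → ℂ} {φ : X → X} (hw : Continuous w)
    (hφ : Continuous φ) (n : ℕ) : Continuous (iterWeight w φ n) :=
  continuous_finsetProd _ fun i _ => hw.comp (hφ.iterate i)

theorem iterWeight_comp_of_semiconj {Y : Type*} {π : Y → X} {ψ : Y → Y} {φ : X → X}
    (h : Function.Semiconj π ψ φ) (w : X → ℂ) (n : ℕ) (y : Y) :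
    iterWeight (fun y => w (π y)) ψ n y = iterWeight w φ n (π y) :=
  Finset.prod_congr rfl fun i _ => congrArg w (h.iterate_right i y)

variable [TopologicalSpace X] {w : X → ℂ} {φ : X → X} {T : C(X, ℂ) →L[ℂ] C(X, ℂ)}

theorem pow_apply_eq_iterWeight_mul (hT : ∀ f k, T f k = w k * f (φ k)) (n : ℕ) (f : C(X, ℂ))
    (k : X) : (T ^ n) f k = iterWeight w φ n k * f (φ^[n] k) := by
  induction n generalizing f with
  | zero => simp [iterWeight]
  | succ n ih =>
    rw [pow_succ, mul_apply_eq_comp, ih, hT, iterWeight, iterWeight,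
      Finset.prod_range_succ, ← Function.iterate_succ_apply' φ n k, mul_assoc]

theorem one_le_norm_pow_mul_norm_iterWeight [CompactSpace X] (hT : ∀ f k, T f k = w k * f (φ k))
    {S : C(X, ℂ) →L[ℂ] C(X, ℂ)} (hTS : T * S = 1) (n : ℕ) (x : X) :
    1 ≤ ‖S ^ n‖ * ‖iterWeight w φ n x‖ := by
  have : Nonempty X := ⟨x⟩
  have hprod : iterWeight w φ n x * (S ^ n) 1 (φ^[n] x) = 1 := by
    rw [← pow_apply_eq_iterWeight_mul hT, ← mul_apply_eq_comp,
      pow_mul_pow_eq_one n hTS]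
    rfl
  calc 1 = ‖iterWeight w φ n x‖ * ‖(S ^ n) 1 (φ^[n] x)‖ := by rw [← norm_mul, hprod, norm_one]
    _ ≤ ‖iterWeight w φ n x‖ * ‖S ^ n‖ := by
        gcongr
        calc ‖(S ^ n) 1 (φ^[n] x)‖ ≤ ‖(S ^ n) 1‖ := ((S ^ n) 1).norm_coe_le_norm _
          _ ≤ ‖S ^ n‖ * ‖(1 : C(X, ℂ))‖ := (S ^ n).le_opNorm 1
          _ = ‖S ^ n‖ := by rw [norm_one, mul_one]
    _ = ‖S ^ n‖ * ‖iterWeight w φ n x‖ := mul_comm _ _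

end WeightedComposition

section WeightedEquation

variable {X : Type*} [TopologicalSpace X] {σ : C(X, X)} {μ : ℂ} (ω g : C(X, ℂ))

theorem exists_eqOn_of_two_mul_norm_lt [CompactSpace X] [T2Space X]
    (hσ : Function.Injective σ) {M : Set X} (hM : IsClosed M)
    (hωM : ∀ k ∈ M, 2 * ‖μ‖ < ‖ω k‖) :
    ∃ f : C(X, ℂ), EqOn ⇑(μ • f - ω * f.comp σ) g M := by
  have : CompactSpace M := isCompact_iff_compactSpace.mp hM.isCompact
  let ι : C(M, X) := ⟨Subtype.val, continuous_subtype_val⟩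
  have hω0 : ∀ k : M, ω k ≠ 0 := fun k h0 => by
    have := hωM k k.2
    rw [h0, norm_zero] at this
    linarith [norm_nonneg μ]
  let ωinv : C(M, ℂ) := ⟨fun k => (ω k)⁻¹, (ω.continuous.comp continuous_subtype_val).inv₀ hω0⟩
  have hωinv : ω.comp ι * ωinv = 1 := by
    ext k
    exact mul_inv_cancel₀ (hω0 k)
  choose extend hextend hextend_norm using fun u : C(M, ℂ) => u.exists_extension_norm_le
    ((σ.continuous.comp continuous_subtype_val).isClosedEmbedding (hσ.comp Subtype.val_injective))
  let R : C(X, ℂ) →L[ℂ] C(M, ℂ) := μ • ContinuousMap.compCLM ℂ ℂ ι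
  let A : C(X, ℂ) →L[ℂ] C(M, ℂ) :=
    (ContinuousLinearMap.mul ℂ C(M, ℂ) (ω.comp ι)).comp (ContinuousMap.compCLM ℂ ℂ (σ.comp ι))
  have hA_extend : ∀ u, A (extend (ωinv * u)) = u := fun u => by
    have : (extend (ωinv * u)).comp (σ.comp ι) = ωinv * u := ContinuousMap.ext (hextend _)
    simp only [A, ContinuousLinearMap.comp_apply, ContinuousLinearMap.mul_apply',
      ContinuousMap.compCLM_apply, this, ← mul_assoc, hωinv, one_mul]
  have hB : ∀ x, ‖extend (ωinv * R x)‖ ≤ 2⁻¹ * ‖x‖ := fun x => by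
    refine (hextend_norm _).trans <| (ContinuousMap.norm_le _ (by positivity)).mpr fun k => ?_
    have hωk := hωM k k.2
    change ‖(ω k)⁻¹ * (μ * x k)‖ ≤ 2⁻¹ * ‖x‖
    rw [norm_mul, norm_mul, norm_inv, inv_mul_le_iff₀ (norm_pos_iff.mpr (hω0 k))]
    calc ‖μ‖ * ‖x k‖ ≤ ‖μ‖ * ‖x‖ := by gcongr; exact x.norm_coe_le_norm _
      _ ≤ ‖ω k‖ * (2⁻¹ * ‖x‖) := by nlinarith [norm_nonneg x]
  obtain ⟨f, hf⟩ := ContinuousLinearMap.surjective_sub_of_contracting_lift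
    (fun u => ⟨_, hA_extend u⟩) (fun x => hA_extend (R x)) (by norm_num) hB (g.comp ι)
  refine ⟨f, fun k hk => ?_⟩
  simpa [R, A, ι] using congr($hf ⟨k, hk⟩)

theorem exists_eqOn_of_mapsTo (hμ : μ ≠ 0) {A B : Set X} (hAB : MapsTo σ A B) {f : C(X, ℂ)}
    (hf : EqOn ⇑(μ • f - ω * f.comp σ) g B) :
    ∃ F : C(X, ℂ), EqOn ⇑(μ • F - ω * F.comp σ) g A := by
  refine ⟨μ⁻¹ • (g + ω * f.comp σ), fun k hk => ?_⟩
  have hσk : μ⁻¹ * (g (σ k) + ω (σ k) * f (σ (σ k))) = f (σ k) := by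
    have := hf (hAB hk)
    simp only [ContinuousMap.sub_apply, ContinuousMap.smul_apply, ContinuousMap.mul_apply,
      ContinuousMap.comp_apply, smul_eq_mul] at this
    rw [← this]
    field_simp
    ring
  simp only [ContinuousMap.sub_apply, ContinuousMap.smul_apply, ContinuousMap.mul_apply,
    ContinuousMap.add_apply, ContinuousMap.comp_apply, smul_eq_mul, hσk]
  field_simp
  ring

theorem exists_eq_of_eqOn_range_iterate (hμ : μ ≠ 0) (t : ℕ) {f : C(X, ℂ)}
    (hf : EqOn ⇑(μ • f - ω * f.comp σ) g (range σ^[t])) :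
    ∃ F : C(X, ℂ), μ • F - ω * F.comp σ = g := by
  induction t generalizing f with
  | zero => exact ⟨f, ContinuousMap.ext fun k => hf ⟨k, rfl⟩⟩
  | succ t ih =>
    obtain ⟨F, hF⟩ := exists_eqOn_of_mapsTo ω g hμ (A := range σ^[t]) (B := range σ^[t + 1])
      (by rintro _ ⟨x, rfl⟩; exact ⟨x, Function.iterate_succ_apply' σ t x⟩) hf
    exact ih hF

end WeightedEquation

theorem stmt4_general (K : Type*) [TopologicalSpace K] [CompactSpace K] [T2Space K]
    (φ : K → K) (hφc : Continuous φ) (hφi : Function.Injective φ)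
    (w : C(K, ℂ)) (T : C(K, ℂ) →L[ℂ] C(K, ℂ))
    (hT : ∀ (f : C(K, ℂ)) (k : K), T f k = w k * f (φ k))
    (L : Set K) [CompactSpace L]
    (hL : L = ⋂ n : ℕ, φ^[n] '' Set.univ)
    (hφL : ∀ k ∈ L, φ k ∈ L)
    (TL : C(L, ℂ) →L[ℂ] C(L, ℂ))
    (hTL : ∀ (f : C(L, ℂ)) (k : L), TL f k = w k.1 * f ⟨φ k.1, hφL k.1 k.2⟩)
    (S : C(L, ℂ) →L[ℂ] C(L, ℂ))
    (hS₁ : TL.comp S = ContinuousLinearMap.id ℂ C(L, ℂ))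
    (lam : ℂ) (hlam0 : lam ≠ 0)
    (hlam : (‖lam‖₊ : ENNReal) < (spectralRadius ℂ S)⁻¹) :
    Function.Surjective (lam • ContinuousLinearMap.id ℂ C(K, ℂ) - T) := by
  -- the `NormedAlgebra` instance paths in `hlam` and in the lemma agree only up to instance
  -- unfolding, which `exact` does not find in time
  obtain ⟨n, hn1, hn⟩ := ((eventually_ge_atTop 1).and
    (eventually_pow_mul_norm_pow_lt S (by convert hlam) (ε := 2⁻¹) (by norm_num))).exists
  let σ : C(K, K) := ⟨φ^[n], hφc.iterate n⟩
  let ω : C(K, ℂ) := ⟨iterWeight w φ n, continuous_iterWeight w.continuous hφc n⟩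
  have hω_L : ⋂ j, range φ^[j] ⊆ {k | 2 * ‖lam ^ n‖ < ‖ω k‖} := fun l hl => by
    have hlL : l ∈ L := by simpa [hL, image_univ] using hl
    have h1 := one_le_norm_pow_mul_norm_iterWeight (φ := fun k : L => ⟨φ k, hφL k k.2⟩)
      hTL hS₁ n ⟨l, hlL⟩
    rw [iterWeight_comp_of_semiconj (π := Subtype.val) (fun _ => rfl) w] at h1
    change 2 * ‖lam ^ n‖ < ‖iterWeight w φ n l‖
    rw [norm_pow]
    push_cast at hn
    nlinarith [norm_nonneg (S ^ n)]
  obtain ⟨j, hj⟩ := hφc.exists_range_iterate_subset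
    (isOpen_lt (by fun_prop) (by fun_prop)) hω_L
  have hσj : range σ^[j] ⊆ range φ^[j] := by
    rw [show (⇑σ)^[j] = φ^[n * j] from (Function.iterate_mul φ n j).symm]
    exact antitone_range_iterate φ (Nat.le_mul_of_pos_left j hn1)
  have hTn : ∀ f, (lam ^ n • ContinuousLinearMap.id ℂ C(K, ℂ) - T ^ n) f
      = lam ^ n • f - ω * f.comp σ := fun f => by
    ext k
    rw [sub_apply, ContinuousMap.sub_apply, smul_apply, ContinuousLinearMap.id_apply,
      pow_apply_eq_iterWeight_mul hT]
    rfl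
  refine T.surjective_smul_id_sub_of_pow lam n fun g => ?_
  obtain ⟨f₀, hf₀⟩ := exists_eqOn_of_two_mul_norm_lt (σ := σ) ω g (hφi.iterate n)
    (isCompact_range (σ.continuous.iterate j)).isClosed fun k hk => hj (hσj hk)
  obtain ⟨f, hf⟩ := exists_eq_of_eqOn_range_iterate ω g (pow_ne_zero n hlam0) j hf₀
  exact ⟨f, (hTn f).trans hf⟩

/-- if `T` is invertible on `C(L)` (with inverse `S`) and
`0 < |λ| < 1/ρ(T⁻¹, C(L))`, then `λI - T` is surjective on `C(K)`. -/
theorem stmt4 (K : Type*) [TopologicalSpace K] [CompactSpace K] [T2Space K]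
    (φ : K → K) (hφc : Continuous φ) (hφi : Function.Injective φ)
    (hns : Set.range φ ≠ Set.univ)
    (w : C(K, ℂ)) (T : C(K, ℂ) →L[ℂ] C(K, ℂ))
    (hT : ∀ (f : C(K, ℂ)) (k : K), T f k = w k * f (φ k))
    (L : Set K) [CompactSpace L]
    (hL : L = ⋂ n : ℕ, φ^[n] '' Set.univ)
    (hφL : ∀ k ∈ L, φ k ∈ L)
    (TL : C(L, ℂ) →L[ℂ] C(L, ℂ))
    (hTL : ∀ (f : C(L, ℂ)) (k : L), TL f k = w k.1 * f ⟨φ k.1, hφL k.1 k.2⟩)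
    (S : C(L, ℂ) →L[ℂ] C(L, ℂ))
    (hS₁ : TL.comp S = ContinuousLinearMap.id ℂ C(L, ℂ))
    (hS₂ : S.comp TL = ContinuousLinearMap.id ℂ C(L, ℂ))
    (lam : ℂ) (hlam0 : lam ≠ 0)
    (hlam : (‖lam‖₊ : ENNReal) < (spectralRadius ℂ S)⁻¹) :
    Function.Surjective (lam • ContinuousLinearMap.id ℂ C(K, ℂ) - T) :=
  stmt4_general K φ hφc hφi w T hT L hL hφL TL hTL S hS₁ lam hlam0 hlam
end

section
/- Let T = wT_φ on C(K) with φ a homeomorphism of K into itself. If T is upper semi-Fredholm (closed range and finite-dimensional kernel), then the set K \ φ(K) is finite. -/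
/-!
Every continuous function vanishing on `φ(K)` lies in the kernel of `T = w T_φ`. Since `φ(K)` is
compact, hence closed, Urysohn's lemma gives, for any `n` points outside it, functions vanishing
on `φ(K)` and taking the values of the Kronecker delta at those points; these are linearly
independent. So infinitely many points outside `φ(K)` force an infinite-dimensional kernel.
-/

namespace ContinuousMap

variable {X 𝕜 : Type*} [TopologicalSpace X] [RCLike 𝕜]

open scoped Classical in
theorem exists_mem_idealOfSet_eq_ite [T4Space X] {s : Set X} (hs : IsOpen s) {t : Set X}
    (ht : t.Finite) (hts : t ⊆ s) {x : X} (hx : x ∈ t) :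
    ∃ f ∈ idealOfSet 𝕜 s, ∀ y ∈ t, f y = if y = x then 1 else 0 := by
  have hdisj : Disjoint (sᶜ ∪ t \ {x}) {x} := by
    rw [Set.disjoint_singleton_right]
    rintro (hxs | ⟨-, hxx⟩)
    exacts [hxs (hts hx), hxx rfl]
  obtain ⟨f, hf0, hf1, -⟩ := exists_continuous_zero_one_of_isClosed
    (hs.isClosed_compl.union ht.sdiff.isClosed) isClosed_singleton hdisj
  refine ⟨(⟨((↑) : ℝ → 𝕜), RCLike.continuous_ofReal⟩ : C(ℝ, 𝕜)).comp f, ?_, ?_⟩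
  · rw [mem_idealOfSet]
    intro y hy
    simp [hf0 (Or.inl hy)]
  · intro y hy
    split_ifs with hyx
    · simp [hyx, hf1 rfl]
    · simp [hf0 (Or.inr ⟨hy, hyx⟩)]

theorem not_finiteDimensional_idealOfSet [T4Space X] {s : Set X} (hs : IsOpen s)
    (hinf : s.Infinite) : ¬FiniteDimensional 𝕜 ((idealOfSet 𝕜 s).restrictScalars 𝕜) := by
  classical
  intro hfin
  set V := (idealOfSet 𝕜 s).restrictScalars 𝕜
  obtain ⟨t, hts, hcard⟩ := hinf.exists_subset_card_eq (Module.finrank 𝕜 V + 1)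
  choose g hgV hg using fun x : t =>
    exists_mem_idealOfSet_eq_ite (𝕜 := 𝕜) hs t.finite_toSet hts x.2
  let restrict : V →ₗ[𝕜] t → 𝕜 :=
    LinearMap.funLeft 𝕜 𝕜 (↑) ∘ₗ coeFnLinearMap 𝕜 ∘ₗ V.subtype
  have hsingle : restrict ∘ (fun x => ⟨g x, hgV x⟩ : t → V) = fun x => Pi.single x 1 := by
    ext x y
    change g x y = _
    rw [hg x y y.2, Pi.single_apply]
    simp only [Subtype.ext_iff]
  have hli := LinearIndependent.of_comp restrict (hsingle ▸ Pi.linearIndependent_single_one t 𝕜)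
  have hle := hli.fintype_card_le_finrank
  simp [hcard] at hle

theorem idealOfSet_compl_range_le_ker {φ : X → X} {w : C(X, 𝕜)} {T : C(X, 𝕜) →ₗ[𝕜] C(X, 𝕜)}
    (hT : ∀ f k, T f k = w k * f (φ k)) :
    (idealOfSet 𝕜 (Set.range φ)ᶜ).restrictScalars 𝕜 ≤ LinearMap.ker T := by
  intro f hf
  rw [Submodule.restrictScalars_mem, mem_idealOfSet, compl_compl] at hf
  ext k
  simp [hT, hf (Set.mem_range_self k)]

end ContinuousMap

theorem stmt6_general (K : Type*) [TopologicalSpace K] [CompactSpace K] [T2Space K]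
    (φ : K → K) (hφc : Continuous φ)
    (w : C(K, ℂ)) (T : C(K, ℂ) →L[ℂ] C(K, ℂ))
    (hT : ∀ (f : C(K, ℂ)) (k : K), T f k = w k * f (φ k))
    (hUSF : IsClosed (Set.range T) ∧ FiniteDimensional ℂ (LinearMap.ker (T : C(K, ℂ) →ₗ[ℂ] C(K, ℂ)))) :
    Set.Finite ((Set.range φ)ᶜ) := by
  have := hUSF.2
  by_contra hinf
  exact ContinuousMap.not_finiteDimensional_idealOfSet (isCompact_range hφc).isClosed.isOpen_compl
    hinf (Submodule.finiteDimensional_of_le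
      (ContinuousMap.idealOfSet_compl_range_le_ker (T := T.toLinearMap) hT))

/-- if `T = w T_φ` is upper semi-Fredholm on `C(K)`, then `K \ φ(K)` is
finite. -/
theorem stmt6 (K : Type*) [TopologicalSpace K] [CompactSpace K] [T2Space K]
    (φ : K → K) (hφc : Continuous φ) (hφi : Function.Injective φ)
    (w : C(K, ℂ)) (T : C(K, ℂ) →L[ℂ] C(K, ℂ))
    (hT : ∀ (f : C(K, ℂ)) (k : K), T f k = w k * f (φ k))
    (hUSF : IsClosed (Set.range T) ∧ FiniteDimensional ℂ (LinearMap.ker (T : C(K, ℂ) →ₗ[ℂ] C(K, ℂ)))) :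
    Set.Finite ((Set.range φ)ᶜ) :=
  stmt6_general K φ hφc w T hT hUSF
end

section
/- Let T = wT_φ on C(K) with φ a non-surjective homeomorphism of K into itself, L = ⋂_{n≥0} φⁿ(K). Then the upper semi-Fredholm spectrum of the restriction of T to C(L) is contained in the upper semi-Fredholm spectrum of T on C(K): σ₂(T, C(L)) ⊆ σ₂(T). -/
/-!
Let `A = λ - T`. If `A` is upper semi-Fredholm, the open mapping theorem on its closed range gives
every `A g` a preimage of norm at most `C ‖A g‖`. Given `f ∈ C(L)` with `‖(λ - T_L) f‖ < ε`, a
Tietze extension `g₀` of `f` satisfies `|A g₀| < ε` on an open neighbourhood `Ω` of `L`, and by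
compactness `Ω` contains some `φᵐ(K)`. For `λ ≠ 0`, with a Urysohn function `v` equal to `1`
on `φᵐ(K)` and `0` off `Ω`, the equation `λ h - w · h ∘ φ = (v - 1) A g₀` has a solution given by
a finite Neumann series that vanishes on `L`, and `g = g₀ + h` satisfies `A g = v A g₀`.
For `λ = 0` it is enough to multiply `g₀` by a cutoff equal to `1` on `L` and `0` on `φ(K \ Ω)`;
injectivity of `φ` makes these two sets disjoint. In both cases `‖A g‖ ≤ ε`.

Correcting `g` by an element of `ker A` shows that every `f` lies within `C ‖(λ - T_L) f‖` of the
finite-dimensional space of restrictions of `ker A`. This estimate makes `λ - T_L` bounded below on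
a closed complement of that space, so `λ - T_L` has closed range and finite-dimensional kernel.
-/

namespace ContinuousLinearMap

variable {𝕜 E F G G' : Type*} [RCLike 𝕜]
  [NormedAddCommGroup E] [NormedSpace 𝕜 E] [NormedAddCommGroup F] [NormedSpace 𝕜 F]
  [NormedAddCommGroup G] [NormedSpace 𝕜 G] [NormedAddCommGroup G'] [NormedSpace 𝕜 G']

def IsUpperSemiFredholm (S : E →L[𝕜] F) : Prop :=
  IsClosed (Set.range S) ∧ FiniteDimensional 𝕜 (LinearMap.ker (S : E →ₗ[𝕜] F))

theorem ker_le_of_infDist_le {S : E →L[𝕜] F} {V : Submodule 𝕜 E} [FiniteDimensional 𝕜 V]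
    {C : ℝ} (h : ∀ f, Metric.infDist f V ≤ C * ‖S f‖) :
    LinearMap.ker (S : E →ₗ[𝕜] F) ≤ V := by
  intro f hf
  rw [LinearMap.mem_ker, coe_coe] at hf
  have hdist : Metric.infDist f V = 0 :=
    le_antisymm (by simpa [hf] using h f) Metric.infDist_nonneg
  rw [← SetLike.mem_coe, ← V.closed_of_finiteDimensional.closure_eq,
    Metric.mem_closure_iff_infDist_zero ⟨0, V.zero_mem⟩]
  exact hdist

theorem norm_le_mul_infDist_of_apply_eq_zero {V : Submodule 𝕜 E} (P : E →L[𝕜] V)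
    (hP : ∀ v : V, P v = v) {f : E} (hf : P f = 0) : ‖f‖ ≤ (1 + ‖P‖) * Metric.infDist f V := by
  rw [← div_le_iff₀' (by positivity), Metric.le_infDist ⟨0, V.zero_mem⟩]
  intro v hv
  have hdecomp : f = (f - v) - (P (f - v) : E) := by simp [map_sub, hf, hP ⟨v, hv⟩]
  rw [div_le_iff₀' (by positivity), dist_eq_norm]
  calc ‖f‖ ≤ ‖f - v‖ + ‖(P (f - v) : E)‖ := by
        conv_lhs => rw [hdecomp]
        exact norm_sub_le _ _
    _ ≤ ‖f - v‖ + ‖P‖ * ‖f - v‖ := by gcongr; exact P.le_opNorm _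
    _ = (1 + ‖P‖) * ‖f - v‖ := by ring

theorem isClosed_range_of_infDist_le [CompleteSpace E] {S : E →L[𝕜] F} {V : Submodule 𝕜 E}
    [FiniteDimensional 𝕜 V] {C : ℝ} (h : ∀ f, Metric.infDist f V ≤ C * ‖S f‖) :
    IsClosed (Set.range S) := by
  obtain ⟨P, hP⟩ := Submodule.ClosedComplemented.of_finiteDimensional V
  set M := LinearMap.ker (P : E →ₗ[𝕜] V)
  have hM : IsClosed (M : Set E) := P.isClosed_ker
  have : CompleteSpace M := hM.completeSpace_coe
  have hanti : AntilipschitzWith ((1 + ‖P‖) * C).toNNReal (S.comp M.subtypeL) :=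
    antilipschitz_of_bound _ fun f => calc
      ‖f‖ ≤ (1 + ‖P‖) * Metric.infDist (f : E) V :=
        P.norm_le_mul_infDist_of_apply_eq_zero hP f.2
      _ ≤ (1 + ‖P‖) * (C * ‖S f‖) := by gcongr; exact h f
      _ = (1 + ‖P‖) * C * ‖S.comp M.subtypeL f‖ := by rw [mul_assoc]; rfl
      _ ≤ _ := by gcongr; exact Real.le_coe_toNNReal _
  have hSM : IsClosed ((M.map (S : E →ₗ[𝕜] F) : Submodule 𝕜 F) : Set F) := by
    have := hanti.isClosed_range (S.comp M.subtypeL).uniformContinuous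
    rwa [coe_comp, Submodule.coe_subtypeL, Set.range_comp, Submodule.coe_subtype,
      Subtype.range_coe] at this
  have : M.CoFG := Submodule.CoFG.ker _
  simpa [LinearMap.coe_range] using
    LinearMap.isClosed_range_of_isClosed_map_of_finiteDimensional_quotient hSM

theorem isUpperSemiFredholm_of_infDist_le [CompleteSpace E] {S : E →L[𝕜] F}
    (V : Submodule 𝕜 E) [FiniteDimensional 𝕜 V] {C : ℝ}
    (h : ∀ f, Metric.infDist f V ≤ C * ‖S f‖) : IsUpperSemiFredholm S :=
  ⟨isClosed_range_of_infDist_le h, Submodule.finiteDimensional_of_le (ker_le_of_infDist_le h)⟩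

theorem exists_preimage_norm_le_of_isClosed_range [CompleteSpace E] [CompleteSpace F]
    (A : E →L[𝕜] F) (hA : IsClosed (Set.range A)) :
    ∃ C > 0, ∀ g, ∃ x, A x = A g ∧ ‖x‖ ≤ C * ‖A g‖ := by
  have : CompleteSpace (LinearMap.range (A : E →ₗ[𝕜] F)) := by
    rw [← coe_coe, ← LinearMap.coe_range] at hA
    exact hA.completeSpace_coe
  obtain ⟨C, hC, hpre⟩ := (A.codRestrict _ (LinearMap.mem_range_self (A : E →ₗ[𝕜] F)))
    |>.exists_preimage_norm_le (by rintro ⟨_, g, rfl⟩; exact ⟨g, rfl⟩)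
  refine ⟨C, hC, fun g => ?_⟩
  obtain ⟨x, hx, hxn⟩ := hpre ⟨A g, g, rfl⟩
  exact ⟨x, congrArg Subtype.val hx, hxn⟩

theorem IsUpperSemiFredholm.of_lift [CompleteSpace E] [CompleteSpace F] [CompleteSpace G]
    {A : E →L[𝕜] F} {B : G →L[𝕜] G'} (R : E →L[𝕜] G) (hA : A.IsUpperSemiFredholm)
    (hlift : ∀ f ε, ‖B f‖ < ε → ∃ g, R g = f ∧ ‖A g‖ ≤ ε) : B.IsUpperSemiFredholm := by
  obtain ⟨C, hC, hpre⟩ := A.exists_preimage_norm_le_of_isClosed_range hA.1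
  have : FiniteDimensional 𝕜 (LinearMap.ker (A : E →ₗ[𝕜] F)) := hA.2
  set V := (LinearMap.ker (A : E →ₗ[𝕜] F)).map (R : E →ₗ[𝕜] G)
  refine isUpperSemiFredholm_of_infDist_le V (C := ‖R‖ * C) fun f => ?_
  have hbound : ∀ ε > ‖B f‖, Metric.infDist f V ≤ ‖R‖ * C * ε := by
    intro ε hε
    obtain ⟨g, rfl, hg⟩ := hlift f ε hε
    obtain ⟨x, hx, hxn⟩ := hpre g
    have hker : R (g - x) ∈ V := Submodule.mem_map_of_mem (by simp [hx])
    calc Metric.infDist (R g) V ≤ dist (R g) (R (g - x)) := Metric.infDist_le_dist_of_mem hker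
      _ = ‖R x‖ := by simp [map_sub]
      _ ≤ ‖R‖ * ‖x‖ := R.le_opNorm x
      _ ≤ ‖R‖ * C * ε := by
        rw [mul_assoc]; gcongr; exact hxn.trans (by gcongr)
  exact ge_of_tendsto ((continuous_const.mul continuous_id).tendsto _ |>.mono_left
    nhdsWithin_le_nhds) (eventually_nhdsWithin_of_forall (s := Set.Ioi _) hbound)

end ContinuousLinearMap

theorem Complex.norm_ofReal_mul_le {u ε : ℝ} {a : ℂ} (hu : u ∈ Set.Icc (0 : ℝ) 1) (hε : 0 ≤ ε)
    (ha : u ≠ 0 → ‖a‖ ≤ ε) : ‖(u : ℂ) * a‖ ≤ ε := by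
  rcases eq_or_ne u 0 with rfl | hu0
  · simpa using hε
  rw [norm_mul, Complex.norm_real, Real.norm_of_nonneg hu.1]
  simpa using mul_le_mul hu.2 (ha hu0) (norm_nonneg a) zero_le_one

theorem Function.antitone_iterate_image_univ {X : Type*} (φ : X → X) :
    Antitone fun n : ℕ => φ^[n] '' Set.univ := by
  refine antitone_nat_of_succ_le fun n => ?_
  rw [Function.iterate_succ, Set.image_comp]
  exact Set.image_mono (Set.subset_univ _)

theorem Function.Injective.mem_iInter_iterate_image_of_apply_mem {X : Type*} {φ : X → X}
    (hφi : Function.Injective φ) {k : X}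
    (hk : φ k ∈ ⋂ n : ℕ, φ^[n] '' Set.univ) : k ∈ ⋂ n : ℕ, φ^[n] '' Set.univ := by
  refine Set.mem_iInter.2 fun n => ?_
  obtain ⟨x, -, hx⟩ := Set.mem_iInter.1 hk (n + 1)
  rw [Function.iterate_succ_apply'] at hx
  exact ⟨_, trivial, hφi hx⟩

theorem exists_sub_weighted_comp_eq {X : Type*} [TopologicalSpace X] {φ : X → X}
    (hφ : Continuous φ) (w : C(X, ℂ)) {lam : ℂ} (hlam : lam ≠ 0) (ψ : C(X, ℂ)) {m : ℕ}
    (hψm : ∀ k, ψ (φ^[m] k) = 0) :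
    ∃ h : C(X, ℂ), (∀ k, lam * h k - w k * h (φ k) = ψ k) ∧
      ∀ k, (∀ n, ψ (φ^[n] k) = 0) → h k = 0 := by
  -- `h = ∑_{n < m} lam⁻¹ ^ (n + 1) (∏_{j < n} w ∘ φ^[j]) ψ ∘ φ^[n]`, a finite Neumann series
  let term : ℕ → X → ℂ := fun n k =>
    lam⁻¹ ^ n * ((∏ j ∈ Finset.range n, w (φ^[j] k)) * ψ (φ^[n] k))
  have hterm : ∀ n, Continuous (term n) := fun n => by
    have := hφ.iterate; fun_prop
  refine ⟨⟨fun k => ∑ n ∈ Finset.range m, lam⁻¹ * term n k, by fun_prop⟩, fun k => ?_, ?_⟩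
  · have hshift : ∀ n, w k * term n (φ k) = lam * term (n + 1) k := fun n => by
      simp only [term, ← Function.iterate_succ_apply, Finset.prod_range_succ',
        Function.iterate_zero_apply, pow_succ]
      field_simp
    have hinv : lam * lam⁻¹ = 1 := mul_inv_cancel₀ hlam
    calc lam * (∑ n ∈ Finset.range m, lam⁻¹ * term n k)
          - w k * ∑ n ∈ Finset.range m, lam⁻¹ * term n (φ k)
        = ∑ n ∈ Finset.range m, (term n k - term (n + 1) k) := by
          rw [Finset.mul_sum, Finset.mul_sum, ← Finset.sum_sub_distrib]
          refine Finset.sum_congr rfl fun n _ => ?_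
          linear_combination (term n k - term (n + 1) k) * hinv - lam⁻¹ * hshift n
      _ = ψ k := by rw [Finset.sum_range_sub']; simp [term, hψm]
  · intro k hk
    simp [term, hk]

section ExtensionFromCore

variable {K : Type*} [TopologicalSpace K] [CompactSpace K] [T2Space K] {φ : K → K}

theorem isClosed_iInter_iterate_image (hφc : Continuous φ) :
    IsClosed (⋂ n : ℕ, φ^[n] '' Set.univ) :=
  isClosed_iInter fun n => (isCompact_univ.image (hφc.iterate n)).isClosed

theorem exists_iterate_image_subset_of_iInter_subset (hφc : Continuous φ) {Ω : Set K}
    (hΩ : IsOpen Ω) (h : ⋂ n : ℕ, φ^[n] '' Set.univ ⊆ Ω) : ∃ m, φ^[m] '' Set.univ ⊆ Ω :=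
  exists_subset_nhds_of_isCompact (Function.antitone_iterate_image_univ φ).directed_ge
    (fun n => isCompact_univ.image (hφc.iterate n)) fun _ hx => hΩ.mem_nhds (h hx)

variable {L : Set K} {Ω : Set K} {ε : ℝ}

theorem exists_extension_norm_weight_mul_comp_le (hφc : Continuous φ)
    (hφi : Function.Injective φ) (hL : L = ⋂ n : ℕ, φ^[n] '' Set.univ) (w g₀ : C(K, ℂ))
    (hΩ : IsOpen Ω) (hLΩ : L ⊆ Ω) (hε : 0 ≤ ε) (hg₀ : ∀ k ∈ Ω, ‖w k * g₀ (φ k)‖ ≤ ε) :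
    ∃ g : C(K, ℂ), (∀ x ∈ L, g x = g₀ x) ∧ ∀ k, ‖w k * g (φ k)‖ ≤ ε := by
  subst hL
  have hdisj : Disjoint (φ '' Ωᶜ) (⋂ n : ℕ, φ^[n] '' Set.univ) := by
    refine Set.disjoint_left.2 ?_
    rintro _ ⟨k, hk, rfl⟩ hφk
    exact hk (hLΩ (hφi.mem_iInter_iterate_image_of_apply_mem hφk))
  obtain ⟨χ, hχ0, hχ1, hχ01⟩ := exists_continuous_zero_one_of_isClosed
    (hΩ.isClosed_compl.isCompact.image hφc).isClosed (isClosed_iInter_iterate_image hφc) hdisj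
  refine ⟨⟨fun k => (χ k : ℂ) * g₀ k, by fun_prop⟩, fun x hx => by simp [hχ1 hx], fun k => ?_⟩
  have hmul : w k * ((χ (φ k) : ℂ) * g₀ (φ k)) = χ (φ k) * (w k * g₀ (φ k)) := by ring
  show ‖w k * ((χ (φ k) : ℂ) * g₀ (φ k))‖ ≤ ε
  rw [hmul]
  refine Complex.norm_ofReal_mul_le (hχ01 _) hε fun hχk => hg₀ k ?_
  by_contra hk
  exact hχk (hχ0 ⟨k, hk, rfl⟩)

theorem exists_extension_norm_sub_weight_mul_comp_le_of_ne_zero (hφc : Continuous φ)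
    (hL : L = ⋂ n : ℕ, φ^[n] '' Set.univ) (hφL : Set.MapsTo φ L L) (w g₀ : C(K, ℂ)) {lam : ℂ}
    (hlam : lam ≠ 0) (hΩ : IsOpen Ω) (hLΩ : L ⊆ Ω) (hε : 0 ≤ ε)
    (hg₀ : ∀ k ∈ Ω, ‖lam * g₀ k - w k * g₀ (φ k)‖ ≤ ε) :
    ∃ g : C(K, ℂ), (∀ x ∈ L, g x = g₀ x) ∧ ∀ k, ‖lam * g k - w k * g (φ k)‖ ≤ ε := by
  obtain ⟨m, hm⟩ := exists_iterate_image_subset_of_iInter_subset hφc hΩ (hL ▸ hLΩ)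
  obtain ⟨v, hv0, hv1, hv01⟩ := exists_continuous_zero_one_of_isClosed hΩ.isClosed_compl
    (isCompact_univ.image (hφc.iterate m)).isClosed (Set.disjoint_compl_left_iff_subset.2 hm)
  let defect : C(K, ℂ) := ⟨fun k => lam * g₀ k - w k * g₀ (φ k), by fun_prop⟩
  let ψ : C(K, ℂ) := ⟨fun k => ((v k : ℂ) - 1) * defect k, by fun_prop⟩
  have hψ : ∀ k ∈ φ^[m] '' Set.univ, ψ k = 0 := fun k hk => by simp [ψ, hv1 hk]
  obtain ⟨h, hh, hh0⟩ := exists_sub_weighted_comp_eq hφc w hlam ψ fun k => hψ _ ⟨k, trivial, rfl⟩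
  refine ⟨g₀ + h, fun x hx => ?_, fun k => ?_⟩
  · have hLm : L ⊆ φ^[m] '' Set.univ := hL ▸ Set.iInter_subset _ m
    simp [hh0 x fun n => hψ _ (hLm (hφL.iterate n hx))]
  · have hdefect : lam * (g₀ + h) k - w k * (g₀ + h) (φ k) = v k * defect k := by
      have hψk : ψ k = ((v k : ℂ) - 1) * defect k := rfl
      have hdk : defect k = lam * g₀ k - w k * g₀ (φ k) := rfl
      simp only [ContinuousMap.add_apply]
      linear_combination hh k + hψk - hdk
    rw [hdefect]
    refine Complex.norm_ofReal_mul_le (hv01 k) hε fun hvk => hg₀ k ?_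
    by_contra hk
    exact hvk (hv0 hk)

theorem exists_extension_norm_sub_weight_mul_comp_le (hφc : Continuous φ)
    (hφi : Function.Injective φ) (hL : L = ⋂ n : ℕ, φ^[n] '' Set.univ) (hφL : Set.MapsTo φ L L)
    (w : C(K, ℂ)) (lam : ℂ) (f : C(L, ℂ)) (hε : 0 ≤ ε)
    (hf : ∀ x : L, ‖lam * f x - w x * f ⟨φ x, hφL x.2⟩‖ < ε) :
    ∃ g : C(K, ℂ), (∀ x : L, g x = f x) ∧ ∀ k, ‖lam * g k - w k * g (φ k)‖ ≤ ε := by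
  obtain ⟨g₀, rfl⟩ := ContinuousMap.exists_restrict_eq (hL ▸ isClosed_iInter_iterate_image hφc) f
  let Ω := {k | ‖lam * g₀ k - w k * g₀ (φ k)‖ < ε}
  have hΩ : IsOpen Ω := isOpen_lt (by fun_prop) continuous_const
  have hLΩ : L ⊆ Ω := fun x hx => hf ⟨x, hx⟩
  obtain ⟨g, hgL, hg⟩ : ∃ g : C(K, ℂ), (∀ x ∈ L, g x = g₀ x) ∧
      ∀ k, ‖lam * g k - w k * g (φ k)‖ ≤ ε := by
    rcases eq_or_ne lam 0 with rfl | hlam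
    · simpa using exists_extension_norm_weight_mul_comp_le hφc hφi hL w g₀ hΩ hLΩ hε
        fun k hk => by simpa using (le_of_lt hk : ‖0 * g₀ k - w k * g₀ (φ k)‖ ≤ ε)
    · exact exists_extension_norm_sub_weight_mul_comp_le_of_ne_zero hφc hL hφL w g₀ hlam hΩ hLΩ hε
        fun k hk => le_of_lt hk
  exact ⟨g, fun x => hgL x x.2, hg⟩

end ExtensionFromCore

noncomputable def ContinuousMap.restrictL (𝕜 : Type*) {X E : Type*} [TopologicalSpace X]
    [CompactSpace X] [NormedField 𝕜] [NormedAddCommGroup E] [NormedSpace 𝕜 E] (s : Set X)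
    [CompactSpace s] :
    C(X, E) →L[𝕜] C(s, E) :=
  LinearMap.mkContinuous
    { toFun := fun g => g.restrict s
      map_add' := fun _ _ => rfl
      map_smul' := fun _ _ => rfl } 1
    fun g => by
      rw [one_mul]
      exact (ContinuousMap.norm_le _ (norm_nonneg g)).2 fun x => g.norm_coe_le_norm x

theorem stmt11_general (K : Type*) [TopologicalSpace K] [CompactSpace K] [T2Space K]
    (φ : K → K) (hφc : Continuous φ) (hφi : Function.Injective φ)
    (w : C(K, ℂ)) (T : C(K, ℂ) →L[ℂ] C(K, ℂ))
    (hT : ∀ (f : C(K, ℂ)) (k : K), T f k = w k * f (φ k))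
    (L : Set K) [CompactSpace L]
    (hL : L = ⋂ n : ℕ, φ^[n] '' Set.univ)
    (hφL : ∀ k ∈ L, φ k ∈ L)
    (TL : C(L, ℂ) →L[ℂ] C(L, ℂ))
    (hTL : ∀ (f : C(L, ℂ)) (k : L), TL f k = w k.1 * f ⟨φ k.1, hφL k.1 k.2⟩) :
    {lam : ℂ | ¬ (IsClosed (Set.range (lam • ContinuousLinearMap.id ℂ C(L, ℂ) - TL)) ∧
        FiniteDimensional ℂ (LinearMap.ker ((lam • ContinuousLinearMap.id ℂ C(L, ℂ) - TL : C(L, ℂ) →L[ℂ] C(L, ℂ)) : C(L, ℂ) →ₗ[ℂ] C(L, ℂ))))}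
      ⊆ {lam : ℂ | ¬ (IsClosed (Set.range (lam • ContinuousLinearMap.id ℂ C(K, ℂ) - T)) ∧
        FiniteDimensional ℂ (LinearMap.ker ((lam • ContinuousLinearMap.id ℂ C(K, ℂ) - T : C(K, ℂ) →L[ℂ] C(K, ℂ)) : C(K, ℂ) →ₗ[ℂ] C(K, ℂ))))} := by
  intro lam hTL_not hT_fred
  refine hTL_not (ContinuousLinearMap.IsUpperSemiFredholm.of_lift (ContinuousMap.restrictL ℂ L)
    hT_fred fun f ε hf => ?_)
  have hfx : ∀ x : L, ‖lam * f x - w x * f ⟨φ x, hφL x x.2⟩‖ < ε := fun x => by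
    simpa [hTL] using (ContinuousMap.norm_coe_le_norm _ x).trans_lt hf
  obtain ⟨g, hgf, hg⟩ := exists_extension_norm_sub_weight_mul_comp_le hφc hφi hL
    (fun _ => hφL _) w lam f ((norm_nonneg _).trans hf.le) hfx
  refine ⟨g, ContinuousMap.ext hgf, (ContinuousMap.norm_le _ ((norm_nonneg _).trans hf.le)).2
    fun k => by simpa [hT] using hg k⟩

/-- `σ₂(T, C(L)) ⊆ σ₂(T)` : if `λI - T` is upper semi-Fredholm on `C(K)`
then `λI - T` is upper semi-Fredholm on `C(L)` (contrapositive form of the inclusion of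
upper semi-Fredholm spectra). -/
theorem stmt11 (K : Type*) [TopologicalSpace K] [CompactSpace K] [T2Space K]
    (φ : K → K) (hφc : Continuous φ) (hφi : Function.Injective φ)
    (hns : Set.range φ ≠ Set.univ)
    (w : C(K, ℂ)) (T : C(K, ℂ) →L[ℂ] C(K, ℂ))
    (hT : ∀ (f : C(K, ℂ)) (k : K), T f k = w k * f (φ k))
    (L : Set K) [CompactSpace L]
    (hL : L = ⋂ n : ℕ, φ^[n] '' Set.univ)
    (hφL : ∀ k ∈ L, φ k ∈ L)
    (TL : C(L, ℂ) →L[ℂ] C(L, ℂ))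
    (hTL : ∀ (f : C(L, ℂ)) (k : L), TL f k = w k.1 * f ⟨φ k.1, hφL k.1 k.2⟩) :
    {lam : ℂ | ¬ (IsClosed (Set.range (lam • ContinuousLinearMap.id ℂ C(L, ℂ) - TL)) ∧
        FiniteDimensional ℂ (LinearMap.ker ((lam • ContinuousLinearMap.id ℂ C(L, ℂ) - TL : C(L, ℂ) →L[ℂ] C(L, ℂ)) : C(L, ℂ) →ₗ[ℂ] C(L, ℂ))))}
      ⊆ {lam : ℂ | ¬ (IsClosed (Set.range (lam • ContinuousLinearMap.id ℂ C(K, ℂ) - T)) ∧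
        FiniteDimensional ℂ (LinearMap.ker ((lam • ContinuousLinearMap.id ℂ C(K, ℂ) - T : C(K, ℂ) →L[ℂ] C(K, ℂ)) : C(K, ℂ) →ₗ[ℂ] C(K, ℂ))))} :=
  stmt11_general K φ hφc hφi w T hT L hL hφL TL hTL
end

section
/- Let T = wT_φ on C(K) with φ a non-surjective homeomorphism of K into itself. Then T is lower semi-Fredholm (closed range and finite codimension) if and only if the zero set Z(w) = {k ∈ K : w(k) = 0} is empty or consists only of isolated points of K; moreover in that case the defect def(T) = codim R(T) equals card Z(w). -/
/-!
By Tietze's theorem every continuous function on `φ(K)` extends to `K`, so the range of `T` is the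
ideal `w · C(K)` of multiples of `w`. The closure of this ideal consists of the functions vanishing
on `Z(w)`; in particular it contains `√|w|`. If the ideal is closed, then `√|w| = h w` with `h`
bounded, so `|w| ≥ 1/‖h‖²` wherever `w ≠ 0`, and `Z(w)` is open. Finite codimension forces `Z(w)`
to be finite, because evaluation at any finite set of zeros maps the quotient onto `ℂ^n`. An open
finite set in a Hausdorff space consists of isolated points. Conversely, when `Z(w)` is open,
`g / w` is continuous for every `g` vanishing on `Z(w)`, so the range is exactly the kernel of
evaluation on the finite set `Z(w)`, and the quotient is `ℂ^Z(w)`.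
-/

open ContinuousMap

theorem forall_isOpen_singleton_iff {X : Type*} [TopologicalSpace X] [T1Space X] {s : Set X}
    (hs : IsCompact s) : (∀ x ∈ s, IsOpen ({x} : Set X)) ↔ IsOpen s ∧ s.Finite := by
  constructor
  · intro h
    refine ⟨isOpen_iff_forall_mem_open.2 fun x hx => ⟨{x}, by simpa using hx, h x hx, rfl⟩,
      hs.finite (isDiscrete_iff_forall_mem_exists_isOpen.2 fun x hx => ⟨{x}, h x hx, ?_⟩)⟩
    simpa using hx
  · rintro ⟨hopen, hfin⟩ x hx
    rw [← Set.sdiff_sdiff_cancel_left (Set.singleton_subset_iff.2 hx)]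
    exact hopen.sdiff (hfin.subset Set.sdiff_subset).isClosed

namespace ContinuousMap

variable {X 𝕜 : Type*} [TopologicalSpace X] [RCLike 𝕜]

variable (𝕜) in
noncomputable def evalOn (s : Set X) : C(X, 𝕜) →ₗ[𝕜] (s → 𝕜) :=
  LinearMap.pi fun z => (evalCLM 𝕜 (z : X) : C(X, 𝕜) →L[𝕜] 𝕜).toLinearMap

@[simp]
theorem evalOn_apply (s : Set X) (f : C(X, 𝕜)) (z : s) : evalOn 𝕜 s f z = f z := rfl

theorem ker_evalOn (s : Set X) :
    LinearMap.ker (evalOn 𝕜 s) = (idealOfSet 𝕜 sᶜ).restrictScalars 𝕜 := by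
  ext f
  simp [funext_iff, mem_idealOfSet]

theorem evalOn_surjective [NormalSpace X] [T1Space X] {s : Set X} (hs : s.Finite) :
    Function.Surjective (evalOn 𝕜 s) := by
  intro v
  have : Finite s := hs
  obtain ⟨f, hf⟩ := exists_restrict_eq hs.isClosed ⟨v, continuous_of_discreteTopology⟩
  exact ⟨f, funext fun z => congr($hf z)⟩

noncomputable def quotientIdealOfSetComplEquiv [NormalSpace X] [T1Space X] {s : Set X}
    (hs : s.Finite) : (C(X, 𝕜) ⧸ (idealOfSet 𝕜 sᶜ).restrictScalars 𝕜) ≃ₗ[𝕜] (s → 𝕜) :=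
  (Submodule.quotEquivOfEq _ _ (ker_evalOn s).symm).trans
    ((evalOn 𝕜 s).quotKerEquivOfSurjective (evalOn_surjective hs))

theorem ncard_le_finrank_quotient [NormalSpace X] [T1Space X] {S : Submodule 𝕜 C(X, 𝕜)}
    [FiniteDimensional 𝕜 (C(X, 𝕜) ⧸ S)] {s : Set X} (hs : s.Finite)
    (hS : S ≤ (idealOfSet 𝕜 sᶜ).restrictScalars 𝕜) :
    s.ncard ≤ Module.finrank 𝕜 (C(X, 𝕜) ⧸ S) := by
  have : Fintype s := hs.fintype
  have hsurj : Function.Surjective (S.liftQ (evalOn 𝕜 s) (hS.trans (ker_evalOn s).ge)) := by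
    intro v
    obtain ⟨f, rfl⟩ := evalOn_surjective hs v
    exact ⟨S.mkQ f, rfl⟩
  have := LinearMap.finrank_le_finrank_of_surjective hsurj
  rwa [Module.finrank_fintype_fun_eq_card, ← Nat.card_eq_fintype_card,
    Nat.card_coe_set_eq] at this

theorem finite_of_le_idealOfSet_compl [NormalSpace X] [T1Space X] {S : Submodule 𝕜 C(X, 𝕜)}
    [FiniteDimensional 𝕜 (C(X, 𝕜) ⧸ S)] {s : Set X}
    (hS : S ≤ (idealOfSet 𝕜 sᶜ).restrictScalars 𝕜) : s.Finite := by
  by_contra hinf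
  obtain ⟨t, hts, htfin, htcard⟩ :=
    Set.Infinite.exists_subset_ncard_eq hinf (Module.finrank 𝕜 (C(X, 𝕜) ⧸ S) + 1)
  have := ncard_le_finrank_quotient htfin
    (hS.trans fun f hf x hx => hf x (Set.compl_subset_compl.2 (Set.compl_subset_compl.2 hts) hx))
  omega

theorem range_eq_span_singleton {Y : Type*} [TopologicalSpace Y] [NormalSpace Y] {φ : X → Y}
    (hφ : Topology.IsClosedEmbedding φ) {w : C(X, 𝕜)} {T : C(Y, 𝕜) → C(X, 𝕜)}
    (hT : ∀ f x, T f x = w x * f (φ x)) : Set.range T = Ideal.span {w} := by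
  ext g
  rw [SetLike.mem_coe, Ideal.mem_span_singleton']
  constructor
  · rintro ⟨f, rfl⟩
    exact ⟨f.comp ⟨φ, hφ.continuous⟩, ext fun x => by simp [hT, mul_comm]⟩
  · rintro ⟨a, rfl⟩
    obtain ⟨f, hf⟩ := a.exists_extension hφ
    exact ⟨f, ext fun x => by rw [hT, ← hf]; simp [mul_comm]⟩

theorem span_singleton_eq_idealOfSet {w : C(X, 𝕜)} (hw : IsOpen {x | w x = 0}) :
    Ideal.span {w} = idealOfSet 𝕜 {x | w x = 0}ᶜ := by
  refine le_antisymm (Ideal.span_le.2 ?_) fun f hf => Ideal.mem_span_singleton'.2 ?_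
  · simp [Set.singleton_subset_iff, mem_idealOfSet]
  rw [mem_idealOfSet, compl_compl] at hf
  have hquot : Continuous fun x => f x / w x := by
    refine continuous_iff_continuousAt.2 fun x => ?_
    by_cases hx : w x = 0
    · refine Filter.EventuallyEq.continuousAt (y := 0) ?_
      exact Filter.eventuallyEq_of_mem (hw.mem_nhds hx) fun y (hy : w y = 0) => by simp [hy]
    · exact f.continuousAt x |>.div (w.continuousAt x) hx
  refine ⟨⟨_, hquot⟩, ext fun x => ?_⟩
  by_cases hx : w x = 0
  · simp [hx, hf hx]
  · simp [hx]

theorem isOpen_zeroSet_of_isClosed_span [CompactSpace X] [T2Space X] {w : C(X, 𝕜)}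
    (hw : IsClosed (Ideal.span {w} : Set C(X, 𝕜))) : IsOpen {x | w x = 0} := by
  let r : C(X, 𝕜) := ⟨fun x => (√‖w x‖ : 𝕜), by fun_prop⟩
  have hclosure : (Ideal.span {w}).closure = Ideal.span {w} :=
    SetLike.coe_injective (by rw [Ideal.coe_closure, hw.closure_eq])
  have hr : r ∈ Ideal.span {w} := by
    rw [← hclosure, ← idealOfSet_ofIdeal_eq_closure, mem_idealOfSet]
    intro x hx
    simp [r, notMem_setOfIdeal.1 hx (Ideal.mem_span_singleton_self w)]
  obtain ⟨h, hh⟩ := Ideal.mem_span_singleton'.1 hr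
  have hbound : ∀ x, w x ≠ 0 → 1 ≤ ‖h‖ * √‖w x‖ := by
    intro x hx
    have hpos : 0 < √‖w x‖ := by positivity
    have hsq : √‖w x‖ ^ 2 = ‖w x‖ := Real.sq_sqrt (norm_nonneg _)
    have : √‖w x‖ = ‖h x‖ * ‖w x‖ := by
      simpa [r, abs_of_nonneg (Real.sqrt_nonneg _)] using congr(‖$hh x‖).symm
    nlinarith [h.norm_coe_le_norm x, norm_nonneg (h x)]
  have hset : {x | w x = 0} = {x | ‖h‖ * √‖w x‖ < 1} := by
    ext x
    by_cases hx : w x = 0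
    · simp [hx]
    · simpa [hx] using hbound x hx
  rw [hset]
  exact isOpen_lt (by fun_prop) continuous_const

end ContinuousMap

theorem stmt15_general (K : Type*) [TopologicalSpace K] [CompactSpace K] [T2Space K]
    (φ : K → K) (hφc : Continuous φ) (hφi : Function.Injective φ)
    (w : C(K, ℂ)) (T : C(K, ℂ) →L[ℂ] C(K, ℂ))
    (hT : ∀ (f : C(K, ℂ)) (k : K), T f k = w k * f (φ k)) :
    ((IsClosed (Set.range T) ∧ FiniteDimensional ℂ (C(K, ℂ) ⧸ LinearMap.range (T : C(K, ℂ) →ₗ[ℂ] C(K, ℂ)))) ↔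
      ∀ k : K, w k = 0 → IsOpen ({k} : Set K)) ∧
    ((∀ k : K, w k = 0 → IsOpen ({k} : Set K)) →
      Module.finrank ℂ (C(K, ℂ) ⧸ LinearMap.range (T : C(K, ℂ) →ₗ[ℂ] C(K, ℂ))) = Nat.card {k : K | w k = 0}) := by
  set Z := {k : K | w k = 0}
  set R := LinearMap.range (T : C(K, ℂ) →ₗ[ℂ] C(K, ℂ))
  have hrange : Set.range T = Ideal.span {w} := range_eq_span_singleton (hφc.isClosedEmbedding hφi) hT
  have hR (hZ : IsOpen Z) : R = (idealOfSet ℂ Zᶜ).restrictScalars ℂ :=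
    SetLike.coe_injective (by rw [LinearMap.coe_range, ContinuousLinearMap.coe_coe, hrange,
      span_singleton_eq_idealOfSet hZ]; rfl)
  have hquot (hZ : IsOpen Z) (hfin : Z.Finite) : (C(K, ℂ) ⧸ R) ≃ₗ[ℂ] (Z → ℂ) :=
    (Submodule.quotEquivOfEq _ _ (hR hZ)).trans (quotientIdealOfSetComplEquiv hfin)
  have hiso : (∀ k, w k = 0 → IsOpen ({k} : Set K)) ↔ IsOpen Z ∧ Z.Finite :=
    forall_isOpen_singleton_iff (isClosed_eq w.continuous continuous_const).isCompact
  rw [hiso]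
  refine ⟨⟨fun ⟨hcl, hfd⟩ => ?_, fun ⟨hZ, hfin⟩ => ?_⟩, fun ⟨hZ, hfin⟩ => ?_⟩
  · have hZ := isOpen_zeroSet_of_isClosed_span (hrange ▸ hcl)
    exact ⟨hZ, finite_of_le_idealOfSet_compl (hR hZ).le⟩
  · have : Finite Z := hfin
    rw [hrange, span_singleton_eq_idealOfSet hZ]
    exact ⟨idealOfSet_closed _ _, Module.Finite.equiv (hquot hZ hfin).symm⟩
  · have : Fintype Z := hfin.fintype
    rw [(hquot hZ hfin).finrank_eq, Module.finrank_fintype_fun_eq_card, Nat.card_eq_fintype_card]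

/-- `T = w T_φ` (with `φ` a non-surjective homeomorphism into `K`) is lower
semi-Fredholm iff every point of `Z(w)` is isolated in `K` (this includes the case
`Z(w) = ∅`); moreover in that case the defect of `T` equals `card Z(w)`. -/
theorem stmt15 (K : Type*) [TopologicalSpace K] [CompactSpace K] [T2Space K]
    (φ : K → K) (hφc : Continuous φ) (hφi : Function.Injective φ)
    (hns : Set.range φ ≠ Set.univ)
    (w : C(K, ℂ)) (T : C(K, ℂ) →L[ℂ] C(K, ℂ))
    (hT : ∀ (f : C(K, ℂ)) (k : K), T f k = w k * f (φ k)) :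
    ((IsClosed (Set.range T) ∧ FiniteDimensional ℂ (C(K, ℂ) ⧸ LinearMap.range (T : C(K, ℂ) →ₗ[ℂ] C(K, ℂ)))) ↔
      ∀ k : K, w k = 0 → IsOpen ({k} : Set K)) ∧
    ((∀ k : K, w k = 0 → IsOpen ({k} : Set K)) →
      Module.finrank ℂ (C(K, ℂ) ⧸ LinearMap.range (T : C(K, ℂ) →ₗ[ℂ] C(K, ℂ))) = Nat.card {k : K | w k = 0}) :=
  stmt15_general K φ hφc hφi w T hT
end

section
/- Let T = wT_φ on C(K) where φ is a homeomorphism of K into itself, and let T' be its adjoint on regular Borel measures. If λ ≠ 0 and there is a sequence of measures μₙ with ‖μₙ‖ = 1 and T'μₙ - λμₙ → 0, then |λ| is an approximate eigenvalue of |T|' where |T| = |w|T_φ; i.e., the approximate point spectrum of T' off zero is invariant under multiplication by unimodular scalars in modulus: |σ_{a.p.}(T') \ {0}| ⊆ σ_{a.p.}(|T|'). -/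
/-!
The modulus `|μ|` of a functional `μ` on `C(K, ℂ)` is `|μ|(f) = sup {‖μ g‖ : |g| ≤ f}` for
`f ≥ 0`, extended linearly; it has the same norm as `μ`, and `μ ↦ |μ|` is Lipschitz. The heart
of the matter is `|μ ∘ T| = |μ| ∘ |T|`: given `|h| ≤ |w| · f ∘ φ` there is `g` with `|g| ≤ f` and
`T g ≈ h`, obtained by dividing `h` approximately by `w` and extending the quotient along the
closed embedding `φ` (Tietze). As also `|λ μ| = |λ| |μ|`, the unit functionals `|μₙ|` satisfy
`‖|μₙ| ∘ |T| - |λ| |μₙ|‖ = ‖|μₙ ∘ T| - |λ μₙ|‖ ≤ 2 ‖μₙ ∘ T - λ μₙ‖ → 0`.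
-/

open Filter Topology
open scoped Pointwise

namespace ContinuousMap

variable {X : Type*} [TopologicalSpace X]

theorem norm_le_norm_of_forall_norm_le [CompactSpace X] {E F : Type*} [SeminormedAddCommGroup E]
    [SeminormedAddCommGroup F] {g : C(X, E)} {f : C(X, F)} (h : ∀ x, ‖g x‖ ≤ ‖f x‖) :
    ‖g‖ ≤ ‖f‖ :=
  (g.norm_le (norm_nonneg f)).2 fun x => (h x).trans (f.norm_coe_le_norm x)

theorem norm_posPart_le [CompactSpace X] (u : C(X, ℝ)) : ‖u⁺‖ ≤ ‖u‖ :=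
  norm_le_norm_of_forall_norm_le fun x => by
    change |(u x)⁺| ≤ |u x|
    rw [abs_of_nonneg (posPart_nonneg _)]
    exact sup_le (le_abs_self _) (abs_nonneg _)

theorem norm_negPart_le [CompactSpace X] (u : C(X, ℝ)) : ‖u⁻‖ ≤ ‖u‖ := by
  simpa [posPart_neg] using norm_posPart_le (-u)

theorem norm_reCLM_compLeftContinuous_le [CompactSpace X] :
    ‖Complex.reCLM.compLeftContinuous ℝ X‖ ≤ 1 :=
  ContinuousLinearMap.opNorm_le_bound _ zero_le_one fun g => by
    rw [one_mul]
    exact norm_le_norm_of_forall_norm_le fun k => Complex.abs_re_le_norm (g k)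

theorem exists_add_eq_of_norm_le_add (v : C(X, ℂ)) {a b : C(X, ℝ)} (ha : 0 ≤ a) (hb : 0 ≤ b)
    (hv : ∀ x, ‖v x‖ ≤ a x + b x) :
    ∃ v₁ v₂ : C(X, ℂ), v = v₁ + v₂ ∧ (∀ x, ‖v₁ x‖ ≤ a x) ∧ ∀ x, ‖v₂ x‖ ≤ b x := by
  -- split `v` in the ratio `a : b`; where `a + b` vanishes so does `v`, and `a / 0 = 0` is harmless
  replace ha : ∀ x, 0 ≤ a x := ha
  replace hb : ∀ x, 0 ≤ b x := hb
  set r : X → ℝ := fun x => a x / (a x + b x)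
  have hab : ∀ x, 0 ≤ a x + b x := fun x => add_nonneg (ha x) (hb x)
  have hr₀ : ∀ x, 0 ≤ r x := fun x => div_nonneg (ha x) (hab x)
  have hr₁ : ∀ x, r x ≤ 1 := fun x => div_le_one_of_le₀ (le_add_of_nonneg_right (hb x)) (hab x)
  have hv₁ : ∀ x, ‖(r x : ℂ) * v x‖ ≤ a x := by
    intro x
    rw [norm_mul, Complex.norm_real, Real.norm_of_nonneg (hr₀ x)]
    rcases (hab x).eq_or_lt with h | h
    · simpa [r, ← h] using ha x
    · calc r x * ‖v x‖ ≤ r x * (a x + b x) := by gcongr; exacts [hr₀ x, hv x]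
        _ = a x := div_mul_cancel₀ _ h.ne'
  have hv₂ : ∀ x, ‖v x - (r x : ℂ) * v x‖ ≤ b x := by
    intro x
    rw [← one_sub_mul, ← Complex.ofReal_one, ← Complex.ofReal_sub, norm_mul, Complex.norm_real,
      Real.norm_of_nonneg (sub_nonneg.2 (hr₁ x))]
    rcases (hab x).eq_or_lt with h | h
    · simpa [norm_le_zero_iff.1 (h ▸ hv x)] using hb x
    · calc (1 - r x) * ‖v x‖ ≤ (1 - r x) * (a x + b x) := by
            gcongr; exacts [sub_nonneg.2 (hr₁ x), hv x]
        _ = b x := by simp only [r]; field_simp; ring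
  have hcont : Continuous fun x => (r x : ℂ) * v x := by
    refine continuous_iff_continuousAt.2 fun x => ?_
    rcases (hab x).eq_or_lt with h | h
    · have hx : (r x : ℂ) * v x = 0 := norm_le_zero_iff.1 ((hv₁ x).trans (by linarith [hb x, ha x]))
      have hlim : Tendsto (fun y => a y + b y) (𝓝 x) (𝓝 0) := h ▸ (a + b).continuous.tendsto x
      rw [ContinuousAt, hx]
      exact squeeze_zero_norm (fun y => (hv₁ y).trans (le_add_of_nonneg_right (hb y))) hlim
    · exact (Complex.continuous_ofReal.continuousAt.comp
        (a.continuousAt x |>.div (a + b).continuous.continuousAt h.ne')).mul (v.continuousAt x)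
  exact ⟨⟨_, hcont⟩, v - ⟨_, hcont⟩, (add_sub_cancel _ _).symm, hv₁, hv₂⟩

theorem exists_norm_le_eq_of_norm_le (v : C(X, ℂ)) {f : C(X, ℝ)} (hf : 0 ≤ f) :
    ∃ g : C(X, ℂ), (∀ x, ‖g x‖ ≤ f x) ∧ ∀ x, ‖v x‖ ≤ f x → g x = v x := by
  set n : C(X, ℝ) := ⟨fun x => ‖v x‖, v.continuous.norm⟩
  obtain ⟨g, h, hv, hg, hh⟩ := v.exists_add_eq_of_norm_le_add (a := f ⊓ n) (b := n - f ⊓ n)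
    (le_inf hf fun x => norm_nonneg (v x)) (sub_nonneg.2 inf_le_right) fun x => by simp [n]
  refine ⟨g, fun x => (hg x).trans inf_le_left, fun x hx => ?_⟩
  have : h x = 0 := norm_le_zero_iff.1 ((hh x).trans (by simp [n, hx]))
  simp [hv, this]

theorem exists_norm_le_comp_eq {Y : Type*} [TopologicalSpace Y] [NormalSpace Y] {e : X → Y}
    (he : IsClosedEmbedding e) {f : C(Y, ℝ)} (hf : 0 ≤ f) (q : C(X, ℂ))
    (hq : ∀ x, ‖q x‖ ≤ f (e x)) :
    ∃ g : C(Y, ℂ), (∀ y, ‖g y‖ ≤ f y) ∧ ∀ x, g (e x) = q x := by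
  obtain ⟨G, hG⟩ := q.exists_extension' he
  have hGe : ∀ x, G (e x) = q x := congrFun hG
  obtain ⟨g, hgf, hgG⟩ := G.exists_norm_le_eq_of_norm_le hf
  exact ⟨g, hgf, fun x => (hgG _ (by rw [hGe]; exact hq x)).trans (hGe x)⟩

theorem exists_norm_le_mul_sub_le (w h : C(X, ℂ)) {F : C(X, ℝ)} (hF : 0 ≤ F)
    (hh : ∀ x, ‖h x‖ ≤ ‖w x‖ * F x) {δ : ℝ} (hδ : 0 < δ) :
    ∃ q : C(X, ℂ), (∀ x, ‖q x‖ ≤ F x) ∧ ∀ x, ‖w x * q x - h x‖ ≤ δ * F x := by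
  -- Tikhonov-regularised division `h / w ≈ conj w * h / (|w|² + δ²)`
  set D : X → ℝ := fun x => ‖w x‖ ^ 2 + δ ^ 2
  have hD : ∀ x, 0 < D x := fun x => by positivity
  have hcont : Continuous fun x => (D x)⁻¹ • (starRingEnd ℂ (w x) * h x) :=
    (Continuous.inv₀ (by fun_prop) fun x => (hD x).ne').smul (by fun_prop)
  have hq : ∀ x, ‖(D x)⁻¹ • (starRingEnd ℂ (w x) * h x)‖ ≤ F x := fun x => by
    have hFx : 0 ≤ F x := hF x
    rw [norm_smul, norm_mul, Complex.norm_conj, Real.norm_of_nonneg (inv_nonneg.2 (hD x).le),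
      inv_mul_le_iff₀ (hD x)]
    nlinarith [mul_le_mul_of_nonneg_left (hh x) (norm_nonneg (w x)), sq_nonneg δ]
  have hwq : ∀ x, ‖w x * ((D x)⁻¹ • (starRingEnd ℂ (w x) * h x)) - h x‖ ≤ δ * F x := fun x => by
    have hFx : 0 ≤ F x := hF x
    have hcoef : (D x)⁻¹ * ‖w x‖ ^ 2 - 1 = -(δ ^ 2 / D x) := by
      field_simp [(hD x).ne']
      simp [D]
    have hsub : w x * ((D x)⁻¹ • (starRingEnd ℂ (w x) * h x)) - h x
        = (-(δ ^ 2 / D x) : ℝ) • h x := by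
      rw [← hcoef, mul_smul_comm, ← mul_assoc, Complex.mul_conj', sub_smul, one_smul,
        Complex.real_smul, Complex.real_smul]
      push_cast
      ring
    rw [hsub, norm_smul, norm_neg, Real.norm_of_nonneg (by positivity), div_mul_eq_mul_div,
      div_le_iff₀ (hD x)]
    nlinarith [sq_nonneg (‖w x‖ - δ), mul_le_mul_of_nonneg_left (hh x) (sq_nonneg δ),
      mul_nonneg hδ.le hFx, norm_nonneg (w x)]
  exact ⟨⟨_, hcont⟩, hq, hwq⟩

end ContinuousMap

namespace StrongDual

variable {K : Type*} [TopologicalSpace K]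

/-- The modulus `|μ|` evaluated on the positive cone; for `f` not nonnegative the value is junk. -/
noncomputable def posModulus (μ : StrongDual ℂ C(K, ℂ)) (f : C(K, ℝ)) : ℝ :=
  sSup ((fun g => ‖μ g‖) '' {g | ∀ k, ‖g k‖ ≤ f k})

variable (μ : StrongDual ℂ C(K, ℂ)) {f f₁ f₂ : C(K, ℝ)}

theorem posModulus_le (hf : 0 ≤ f) {r : ℝ} (h : ∀ g : C(K, ℂ), (∀ k, ‖g k‖ ≤ f k) → ‖μ g‖ ≤ r) :
    μ.posModulus f ≤ r :=
  csSup_le ⟨_, 0, fun k => by simpa using hf k, rfl⟩ (Set.forall_mem_image.2 h)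

theorem posModulus_smul (c : ℂ) : (c • μ).posModulus f = ‖c‖ * μ.posModulus f := by
  unfold posModulus
  rw [← smul_eq_mul, ← Real.sSup_smul_of_nonneg (norm_nonneg c), ← Set.image_smul,
    Set.image_image]
  simp

variable [CompactSpace K]

theorem norm_apply_le_posModulus {g : C(K, ℂ)} (hg : ∀ k, ‖g k‖ ≤ f k) :
    ‖μ g‖ ≤ μ.posModulus f := by
  refine le_csSup ⟨‖μ‖ * ‖f‖, Set.forall_mem_image.2 fun g' hg' => ?_⟩ ⟨g, hg, rfl⟩
  exact μ.le_opNorm_of_le (ContinuousMap.norm_le_norm_of_forall_norm_le fun k =>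
    (hg' k).trans (Real.le_norm_self _))

theorem posModulus_nonneg (hf : 0 ≤ f) : 0 ≤ μ.posModulus f := by
  simpa using μ.norm_apply_le_posModulus (g := 0) fun k => by simpa using hf k

theorem posModulus_le_opNorm_mul (hf : 0 ≤ f) : μ.posModulus f ≤ ‖μ‖ * ‖f‖ :=
  μ.posModulus_le hf fun _ hg => μ.le_opNorm_of_le
    (ContinuousMap.norm_le_norm_of_forall_norm_le fun k => (hg k).trans (Real.le_norm_self _))

@[simp]
theorem posModulus_zero : μ.posModulus 0 = 0 :=
  le_antisymm (by simpa using μ.posModulus_le_opNorm_mul le_rfl) (μ.posModulus_nonneg le_rfl)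

theorem posModulus_add (hf₁ : 0 ≤ f₁) (hf₂ : 0 ≤ f₂) :
    μ.posModulus (f₁ + f₂) = μ.posModulus f₁ + μ.posModulus f₂ := by
  apply le_antisymm
  · refine μ.posModulus_le (add_nonneg hf₁ hf₂) fun g hg => ?_
    obtain ⟨g₁, g₂, rfl, hg₁, hg₂⟩ := g.exists_add_eq_of_norm_le_add hf₁ hf₂ hg
    rw [map_add]
    exact (norm_add_le _ _).trans
      (add_le_add (μ.norm_apply_le_posModulus hg₁) (μ.norm_apply_le_posModulus hg₂))
  · -- rotating `g₁, g₂` by unimodular scalars makes `μ g₁, μ g₂ ≥ 0`, so their norms add up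
    have key : ∀ g₁ g₂ : C(K, ℂ), (∀ k, ‖g₁ k‖ ≤ f₁ k) → (∀ k, ‖g₂ k‖ ≤ f₂ k) →
        ‖μ g₁‖ + ‖μ g₂‖ ≤ μ.posModulus (f₁ + f₂) := by
      intro g₁ g₂ hg₁ hg₂
      obtain ⟨θ₁, hθ₁, hμ₁⟩ := Complex.exists_norm_eq_mul_self (μ g₁)
      obtain ⟨θ₂, hθ₂, hμ₂⟩ := Complex.exists_norm_eq_mul_self (μ g₂)
      have hμ : μ (θ₁ • g₁ + θ₂ • g₂) = ((‖μ g₁‖ + ‖μ g₂‖ : ℝ) : ℂ) := by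
        simp [hμ₁, hμ₂]
      calc ‖μ g₁‖ + ‖μ g₂‖ = ‖μ (θ₁ • g₁ + θ₂ • g₂)‖ := by
            rw [hμ, Complex.norm_real, Real.norm_of_nonneg (by positivity)]
        _ ≤ μ.posModulus (f₁ + f₂) := μ.norm_apply_le_posModulus fun k => calc
            ‖θ₁ * g₁ k + θ₂ * g₂ k‖ ≤ ‖θ₁ * g₁ k‖ + ‖θ₂ * g₂ k‖ := norm_add_le _ _
            _ ≤ f₁ k + f₂ k := by
              simpa only [norm_mul, hθ₁, hθ₂, one_mul] using add_le_add (hg₁ k) (hg₂ k)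
    rw [← le_sub_iff_add_le]
    refine μ.posModulus_le hf₁ fun g₁ hg₁ => ?_
    rw [le_sub_comm]
    exact μ.posModulus_le hf₂ fun g₂ hg₂ => by linarith [key g₁ g₂ hg₁ hg₂]

theorem posModulus_smul_right {c : ℝ} (hc : 0 ≤ c) :
    μ.posModulus (c • f) = c * μ.posModulus f := by
  rcases hc.eq_or_lt with rfl | hc
  · simp
  have hc' : (c : ℂ) ≠ 0 := Complex.ofReal_ne_zero.2 hc.ne'
  have hset : {g : C(K, ℂ) | ∀ k, ‖g k‖ ≤ (c • f) k}
      = (c : ℂ) • {g : C(K, ℂ) | ∀ k, ‖g k‖ ≤ f k} := by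
    ext g
    simp only [Set.mem_smul_set_iff_inv_smul_mem₀ hc', Set.mem_ofPred_eq, ContinuousMap.smul_apply,
      smul_eq_mul, norm_mul, norm_inv, Complex.norm_real, Real.norm_of_nonneg hc.le,
      inv_mul_le_iff₀ hc]
  unfold posModulus
  rw [hset, ← Set.image_smul, Set.image_image, ← smul_eq_mul, ← Real.sSup_smul_of_nonneg hc.le,
    ← Set.image_smul, Set.image_image]
  simp [Real.norm_of_nonneg hc.le]

theorem abs_posModulus_sub_posModulus_le (ν : StrongDual ℂ C(K, ℂ)) (hf : 0 ≤ f) :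
    |μ.posModulus f - ν.posModulus f| ≤ ‖μ - ν‖ * ‖f‖ := by
  have key : ∀ α β : StrongDual ℂ C(K, ℂ),
      α.posModulus f ≤ β.posModulus f + ‖α - β‖ * ‖f‖ := fun α β =>
    α.posModulus_le hf fun g hg => calc
      ‖α g‖ ≤ ‖β g‖ + ‖(α - β) g‖ := by simpa using norm_le_insert' (α g) (β g)
      _ ≤ β.posModulus f + ‖α - β‖ * ‖f‖ := add_le_add (β.norm_apply_le_posModulus hg)
          ((α - β).le_opNorm_of_le (ContinuousMap.norm_le_norm_of_forall_norm_le fun k =>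
            (hg k).trans (Real.le_norm_self _)))
  rw [abs_sub_le_iff]
  constructor
  · linarith [key μ ν]
  · linarith [norm_sub_rev μ ν ▸ key ν μ]

variable {φ : K → K} {w : C(K, ℂ)} {T : C(K, ℂ) →L[ℂ] C(K, ℂ)}

theorem posModulus_comp [NormalSpace K] (hφ : IsClosedEmbedding φ)
    (hT : ∀ g k, T g k = w k * g (φ k)) (hf : 0 ≤ f) {p : C(K, ℝ)}
    (hp : ∀ k, p k = ‖w k‖ * f (φ k)) :
    posModulus (μ.comp T) f = μ.posModulus p := by
  have hp₀ : 0 ≤ p := fun k => by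
    change 0 ≤ p k
    rw [hp k]
    exact mul_nonneg (norm_nonneg _) (hf (φ k))
  apply le_antisymm
  · refine posModulus_le (μ.comp T) hf fun g hg => ?_
    change ‖μ (T g)‖ ≤ _
    refine μ.norm_apply_le_posModulus fun k => ?_
    rw [hT, hp, norm_mul]
    exact mul_le_mul_of_nonneg_left (hg (φ k)) (norm_nonneg _)
  -- given `|h| ≤ |w| f ∘ φ`, solve `T g ≈ h` with `|g| ≤ f`: divide by `w`, then extend along `φ`
  refine μ.posModulus_le hp₀ fun h hh => le_of_forall_pos_le_add fun ε hε => ?_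
  set δ := ε / (‖μ‖ * ‖f‖ + 1)
  have hδ : 0 < δ := by positivity
  obtain ⟨q, hq, hwq⟩ := w.exists_norm_le_mul_sub_le h (F := f.comp ⟨φ, hφ.continuous⟩)
    (fun k => hf (φ k)) (fun k => (hh k).trans_eq (hp k)) hδ
  obtain ⟨g, hg, hgq⟩ := ContinuousMap.exists_norm_le_comp_eq hφ hf q hq
  have hTg : ‖T g - h‖ ≤ δ * ‖f‖ := (ContinuousMap.norm_le _ (by positivity)).2 fun k => by
    rw [ContinuousMap.sub_apply, hT, hgq]
    exact (hwq k).trans (mul_le_mul_of_nonneg_left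
      ((Real.le_norm_self _).trans (f.norm_coe_le_norm _)) hδ.le)
  have hε : ‖μ‖ * (δ * ‖f‖) ≤ ε := by
    have : δ * (‖μ‖ * ‖f‖ + 1) = ε := div_mul_cancel₀ _ (by positivity)
    nlinarith
  calc ‖μ h‖ = ‖μ (T g) - μ (T g - h)‖ := by rw [← map_sub, sub_sub_cancel]
    _ ≤ ‖μ (T g)‖ + ‖μ (T g - h)‖ := norm_sub_le _ _
    _ ≤ posModulus (μ.comp T) f + ‖μ‖ * (δ * ‖f‖) :=
      add_le_add (norm_apply_le_posModulus (μ.comp T) hg) (μ.le_opNorm_of_le hTg)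
    _ ≤ posModulus (μ.comp T) f + ε := by gcongr

theorem posModulus_posPart_sub_posModulus_negPart {u p q : C(K, ℝ)} (hp : 0 ≤ p) (hq : 0 ≤ q)
    (h : u = p - q) :
    μ.posModulus u⁺ - μ.posModulus u⁻ = μ.posModulus p - μ.posModulus q := by
  have hsum : u⁺ + q = p + u⁻ := sub_eq_sub_iff_add_eq_add.1 ((posPart_sub_negPart u).trans h)
  have := congrArg μ.posModulus hsum
  rw [μ.posModulus_add (posPart_nonneg u) hq, μ.posModulus_add hp (negPart_nonneg u)] at this
  linarith

noncomputable def realModulus : C(K, ℝ) →L[ℝ] ℝ :=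
  LinearMap.mkContinuous
    { toFun := fun u => μ.posModulus u⁺ - μ.posModulus u⁻
      map_add' := fun u v => by
        rw [μ.posModulus_posPart_sub_posModulus_negPart
          (add_nonneg (posPart_nonneg u) (posPart_nonneg v))
          (add_nonneg (negPart_nonneg u) (negPart_nonneg v))
          (by rw [add_sub_add_comm, posPart_sub_negPart, posPart_sub_negPart]),
          μ.posModulus_add (posPart_nonneg u) (posPart_nonneg v),
          μ.posModulus_add (negPart_nonneg u) (negPart_nonneg v)]
        ring
      map_smul' := fun c u => by
        rcases le_total 0 c with hc | hc
        · rw [μ.posModulus_posPart_sub_posModulus_negPart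
            (smul_nonneg hc (posPart_nonneg u)) (smul_nonneg hc (negPart_nonneg u))
            (by rw [← smul_sub, posPart_sub_negPart]),
            μ.posModulus_smul_right hc, μ.posModulus_smul_right hc, RingHom.id_apply, smul_eq_mul]
          ring
        · have hc' : 0 ≤ -c := neg_nonneg.2 hc
          rw [μ.posModulus_posPart_sub_posModulus_negPart
            (smul_nonneg hc' (negPart_nonneg u)) (smul_nonneg hc' (posPart_nonneg u))
            (by rw [← smul_sub, neg_smul, ← smul_neg, neg_sub, posPart_sub_negPart]),
            μ.posModulus_smul_right hc', μ.posModulus_smul_right hc', RingHom.id_apply,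
            smul_eq_mul]
          ring }
    ‖μ‖ fun u => by
      have hpos := μ.posModulus_le_opNorm_mul (posPart_nonneg u)
      have hneg := μ.posModulus_le_opNorm_mul (negPart_nonneg u)
      have := mul_le_mul_of_nonneg_left u.norm_posPart_le (norm_nonneg μ)
      have := mul_le_mul_of_nonneg_left u.norm_negPart_le (norm_nonneg μ)
      change |μ.posModulus u⁺ - μ.posModulus u⁻| ≤ ‖μ‖ * ‖u‖
      rw [abs_sub_le_iff]
      constructor <;>
        linarith [μ.posModulus_nonneg (posPart_nonneg u), μ.posModulus_nonneg (negPart_nonneg u)]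

theorem realModulus_apply (u : C(K, ℝ)) :
    μ.realModulus u = μ.posModulus u⁺ - μ.posModulus u⁻ :=
  rfl

theorem norm_realModulus_le : ‖μ.realModulus‖ ≤ ‖μ‖ :=
  LinearMap.mkContinuous_norm_le _ (norm_nonneg μ) _

theorem norm_realModulus_sub_realModulus_le (ν : StrongDual ℂ C(K, ℂ)) :
    ‖μ.realModulus - ν.realModulus‖ ≤ 2 * ‖μ - ν‖ := by
  refine ContinuousLinearMap.opNorm_le_bound _ (by positivity) fun u => ?_
  have hpos := μ.abs_posModulus_sub_posModulus_le ν (posPart_nonneg u)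
  have hneg := μ.abs_posModulus_sub_posModulus_le ν (negPart_nonneg u)
  have := mul_le_mul_of_nonneg_left u.norm_posPart_le (norm_nonneg (μ - ν))
  have := mul_le_mul_of_nonneg_left u.norm_negPart_le (norm_nonneg (μ - ν))
  rw [sub_apply, realModulus_apply, realModulus_apply, Real.norm_eq_abs]
  calc _ = |(μ.posModulus u⁺ - ν.posModulus u⁺) - (μ.posModulus u⁻ - ν.posModulus u⁻)| := by
        congr 1
        ring
    _ ≤ _ := (abs_sub _ _).trans (by linarith)

theorem realModulus_smul (c : ℂ) : (c • μ).realModulus = ‖c‖ • μ.realModulus := by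
  ext u
  rw [smul_apply, realModulus_apply, realModulus_apply, posModulus_smul, posModulus_smul,
    smul_eq_mul]
  ring

theorem realModulus_comp [NormalSpace K] (hφ : IsClosedEmbedding φ)
    (hT : ∀ g k, T g k = w k * g (φ k)) {u p : C(K, ℝ)} (hp : ∀ k, p k = ‖w k‖ * u (φ k)) :
    realModulus (μ.comp T) u = μ.realModulus p := by
  let W : C(K, ℝ) → C(K, ℝ) := fun v => ⟨fun k => ‖w k‖ * v (φ k), by fun_prop⟩
  have hW : ∀ v, 0 ≤ v → 0 ≤ W v := fun v hv k => mul_nonneg (norm_nonneg _) (hv (φ k))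
  have hpW : p = W u⁺ - W u⁻ := by
    ext k
    simp only [hp, ContinuousMap.sub_apply, ← mul_sub, W, ContinuousMap.coe_mk]
    rw [← ContinuousMap.sub_apply, posPart_sub_negPart]
  rw [realModulus_apply, realModulus_apply,
    μ.posModulus_posPart_sub_posModulus_negPart (hW _ (posPart_nonneg u)) (hW _ (negPart_nonneg u))
      hpW, μ.posModulus_comp hφ hT (posPart_nonneg u) (p := W u⁺) fun k => rfl,
    μ.posModulus_comp hφ hT (negPart_nonneg u) (p := W u⁻) fun k => rfl]

noncomputable def modulus : StrongDual ℂ C(K, ℂ) :=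
  extendRCLike (μ.realModulus.comp (Complex.reCLM.compLeftContinuous ℝ K))

theorem norm_modulus : ‖μ.modulus‖ = ‖μ‖ := by
  set re := Complex.reCLM.compLeftContinuous ℝ K
  rw [modulus, norm_extendRCLike]
  refine le_antisymm ((ContinuousLinearMap.opNorm_comp_le _ _).trans ?_) ?_
  · simpa using mul_le_mul μ.norm_realModulus_le ContinuousMap.norm_reCLM_compLeftContinuous_le
      (by positivity) (norm_nonneg μ)
  have hμ : ‖μ‖ ≤ μ.posModulus 1 :=
    μ.opNorm_le_bound (μ.posModulus_nonneg zero_le_one) fun g => by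
      rw [mul_comm, ← μ.posModulus_smul_right (norm_nonneg g)]
      exact μ.norm_apply_le_posModulus fun k => by simpa using g.norm_coe_le_norm k
  have hone : μ.realModulus (re 1) = μ.posModulus 1 := by
    have : re 1 = 1 := by ext; simp [re]
    simp [this, realModulus_apply]
  have hnorm_one : ‖(1 : C(K, ℂ))‖ ≤ 1 := (ContinuousMap.norm_le _ zero_le_one).2 fun k => by simp
  calc ‖μ‖ ≤ (μ.realModulus.comp re) 1 := hμ.trans_eq hone.symm
    _ ≤ ‖μ.realModulus.comp re‖ * ‖(1 : C(K, ℂ))‖ :=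
      (Real.le_norm_self _).trans (ContinuousLinearMap.le_opNorm _ _)
    _ ≤ ‖μ.realModulus.comp re‖ := mul_le_of_le_one_right (norm_nonneg _) hnorm_one

theorem norm_modulus_sub_modulus_le (ν : StrongDual ℂ C(K, ℂ)) :
    ‖μ.modulus - ν.modulus‖ ≤ 2 * ‖μ - ν‖ := by
  change ‖extendRCLikeₗᵢ (𝕜 := ℂ) _ - extendRCLikeₗᵢ _‖ ≤ _
  rw [← map_sub, LinearIsometryEquiv.norm_map, ← ContinuousLinearMap.sub_comp]
  refine (ContinuousLinearMap.opNorm_comp_le _ _).trans ?_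
  simpa using mul_le_mul (μ.norm_realModulus_sub_realModulus_le ν)
    ContinuousMap.norm_reCLM_compLeftContinuous_le (by positivity) (by positivity)

theorem modulus_smul (c : ℂ) : (c • μ).modulus = (‖c‖ : ℂ) • μ.modulus := by
  rw [modulus, modulus, realModulus_smul, ContinuousLinearMap.smul_comp]
  ext g
  change extendRCLikeₗ (‖c‖ • _) g = _
  rw [map_smul, smul_apply, smul_apply, Complex.real_smul, smul_eq_mul]
  rfl

theorem modulus_comp [NormalSpace K] (hφ : IsClosedEmbedding φ)
    (hT : ∀ g k, T g k = w k * g (φ k)) {Tabs : C(K, ℂ) →L[ℂ] C(K, ℂ)}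
    (hTabs : ∀ g k, Tabs g k = (‖w k‖ : ℂ) * g (φ k)) :
    modulus (μ.comp T) = μ.modulus.comp Tabs := by
  have hre : ∀ g, realModulus (μ.comp T) (Complex.reCLM.compLeftContinuous ℝ K g)
      = μ.realModulus (Complex.reCLM.compLeftContinuous ℝ K (Tabs g)) := fun g =>
    μ.realModulus_comp hφ hT fun k => by simp [hTabs]
  ext g
  simp only [modulus, extendRCLike_apply, ContinuousLinearMap.comp_apply, hre, map_smul]

end StrongDual

theorem stmt19_general (K : Type*) [TopologicalSpace K] [CompactSpace K] [T2Space K]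
    (φ : K → K) (hφc : Continuous φ) (hφi : Function.Injective φ)
    (w : C(K, ℂ)) (T : C(K, ℂ) →L[ℂ] C(K, ℂ))
    (hT : ∀ (f : C(K, ℂ)) (k : K), T f k = w k * f (φ k))
    (Tabs : C(K, ℂ) →L[ℂ] C(K, ℂ))
    (hTabs : ∀ (f : C(K, ℂ)) (k : K), Tabs f k = (‖w k‖ : ℂ) * f (φ k))
    (lam : ℂ)
    (μs : ℕ → StrongDual ℂ C(K, ℂ))
    (hnorm : ∀ n, ‖μs n‖ = 1)
    (htend : Tendsto (fun n => (μs n).comp T - lam • μs n) atTop (nhds 0)) :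
    ∃ νs : ℕ → StrongDual ℂ C(K, ℂ),
      (∀ n, ‖νs n‖ = 1) ∧
      Tendsto (fun n => (νs n).comp Tabs - (‖lam‖ : ℂ) • νs n) atTop (nhds 0) := by
  refine ⟨fun n => (μs n).modulus, fun n => by rw [(μs n).norm_modulus, hnorm], ?_⟩
  have hmod : ∀ n, (μs n).modulus.comp Tabs - (‖lam‖ : ℂ) • (μs n).modulus
      = StrongDual.modulus ((μs n).comp T) - (lam • μs n).modulus := fun n => by
    rw [(μs n).modulus_comp (hφc.isClosedEmbedding hφi) hT hTabs, StrongDual.modulus_smul]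
  refine squeeze_zero_norm
    (fun n => (hmod n).symm ▸ StrongDual.norm_modulus_sub_modulus_le _ _) ?_
  simpa using htend.norm.const_mul 2

/-- if `λ ≠ 0` is an approximate eigenvalue of `T' = (w T_φ)'` (witnessed
by unit functionals `μₙ` with `T'μₙ - λμₙ → 0`), then `|λ|` is an approximate eigenvalue
of `|T|'`, where `|T| = |w| T_φ`. -/
theorem stmt19 (K : Type*) [TopologicalSpace K] [CompactSpace K] [T2Space K]
    (φ : K → K) (hφc : Continuous φ) (hφi : Function.Injective φ)
    (w : C(K, ℂ)) (T : C(K, ℂ) →L[ℂ] C(K, ℂ))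
    (hT : ∀ (f : C(K, ℂ)) (k : K), T f k = w k * f (φ k))
    (Tabs : C(K, ℂ) →L[ℂ] C(K, ℂ))
    (hTabs : ∀ (f : C(K, ℂ)) (k : K), Tabs f k = (‖w k‖ : ℂ) * f (φ k))
    (lam : ℂ) (hlam : lam ≠ 0)
    (μs : ℕ → StrongDual ℂ C(K, ℂ))
    (hnorm : ∀ n, ‖μs n‖ = 1)
    (htend : Tendsto (fun n => (μs n).comp T - lam • μs n) atTop (nhds 0)) :
    ∃ νs : ℕ → StrongDual ℂ C(K, ℂ),
      (∀ n, ‖νs n‖ = 1) ∧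
      Tendsto (fun n => (νs n).comp Tabs - (‖lam‖ : ℂ) • νs n) atTop (nhds 0) :=
  stmt19_general K φ hφc hφi w T hT Tabs hTabs lam μs hnorm htend
end
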